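/- arXiv:1312.2520 — 7 statements merged into one kernel-verified Lean document; each statement's English description precedes it below -/
import Mathlib

section
/- Let P be a finite bounded poset. The m-cover poset P^⟨m⟩ is a lattice for every integer m > 0 if and only if P is a lattice in which the meet p ∧ q belongs to {0̂, p, q} for all p, q ∈ P. -/
/-- The defining shape of elements of the `m`-cover poset: a tuple consisting of
`l₀` copies of `⊥`, then `l₁` copies of `p₁`, then `l₂` copies of `p₂`,
where `p₁ ⋖ p₂` is a cover relation. -/
def IsMCoverTuple {α : Type*} [PartialOrder α] [OrderBot α] (m : ℕ) (f : Fin m → α) : Prop :=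
  ∃ (l₀ l₁ l₂ : ℕ) (p₁ p₂ : α), l₀ + l₁ + l₂ = m ∧ p₁ ⋖ p₂ ∧
    ∀ i : Fin m, f i = if (i : ℕ) < l₀ then ⊥ else if (i : ℕ) < l₀ + l₁ then p₁ else p₂

/-- The `m`-cover poset of `α`, as a subposet of the `m`-fold direct product `Fin m → α`
with the componentwise order. -/
abbrev MCover (α : Type*) [PartialOrder α] [OrderBot α] (m : ℕ) : Type _ :=
  {f : Fin m → α // IsMCoverTuple m f}

/-- A partial order is a lattice: any two elements have a least upper bound and a
greatest lower bound. -/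
def IsLatticeOrder (β : Type*) [PartialOrder β] : Prop :=
  (∀ a b : β, ∃ c, IsLUB {a, b} c) ∧ (∀ a b : β, ∃ c, IsGLB {a, b} c)

/-!
In a finite poset with a cover relation, `f : Fin m → α` is an `m`-cover tuple iff
`f i = ⊥ ∨ f i ⩿ f j` whenever `i ≤ j`. When every meet `a ⊓ b` lies in `{⊥, a, b}`, this local
condition survives componentwise meets, so `P^⟨m⟩` has meets; being finite with a top element, it
is then a lattice.

Conversely `P ≅ P^⟨1⟩` is a lattice. If incomparable `a, b` had a meet `c ≠ ⊥`, pick `a' ≤ a` and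
`b' ≤ b` covering `c` and let `s = a' ⊔ b'`. Any upper bound of `(c, a')` and `(c, b')` in `P^⟨2⟩`
has second entry `≥ s` and first entry `≠ ⊥`, hence covered by or equal to its second entry; so the
pairs `(x, s)` with `a' ≤ x ⋖ s` and `(y, s)` with `b' ≤ y ⋖ s` are distinct minimal upper bounds.
-/

section Bounds

variable {β : Type*} [Preorder β]

theorem Set.Finite.exists_isGLB_insert (hglb : ∀ a b : β, ∃ c, IsGLB {a, b} c) (x : β)
    {s : Set β} (hs : s.Finite) : ∃ c, IsGLB (insert x s) c := by
  induction s, hs using Set.Finite.induction_on with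
  | empty => exact ⟨x, by simp⟩
  | @insert a s _ _ ih =>
    obtain ⟨c, hc⟩ := ih
    obtain ⟨d, hd⟩ := hglb a c
    rw [IsGLB, lowerBounds_insert, lowerBounds_singleton] at hd
    refine ⟨d, ?_⟩
    rwa [Set.insert_comm, IsGLB, lowerBounds_insert, hc.lowerBounds_eq]

theorem exists_isLUB_of_upperBounds_nonempty [Finite β] (hglb : ∀ a b : β, ∃ c, IsGLB {a, b} c)
    {s : Set β} (hs : (upperBounds s).Nonempty) : ∃ c, IsLUB s c := by
  obtain ⟨t, ht⟩ := hs
  obtain ⟨c, hc⟩ := (upperBounds s).toFinite.exists_isGLB_insert hglb t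
  rw [Set.insert_eq_of_mem ht] at hc
  exact ⟨c, isGLB_upperBounds.1 hc⟩

end Bounds

theorem Fin.exists_iff_lt_of_isLowerSet {m : ℕ} {s : Set (Fin m)} (hs : IsLowerSet s) :
    ∃ l ≤ m, ∀ i : Fin m, i ∈ s ↔ (i : ℕ) < l := by
  classical
  refine ⟨s.toFinset.card, (Finset.card_le_univ _).trans_eq (Fintype.card_fin m),
    fun i => ⟨fun hi => ?_, ?_⟩⟩
  · have : Finset.Iic i ⊆ s.toFinset := fun j hj => by
      simpa using hs (Finset.mem_Iic.1 hj) hi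
    simpa [Fin.card_Iic] using Finset.card_le_card this
  · contrapose
    intro hi
    have : s.toFinset ⊆ Finset.Iio i := fun j hj => by
      simp only [Set.mem_toFinset] at hj
      exact Finset.mem_Iio.2 (lt_of_not_ge fun hij => hi (hs hij hj))
    simpa [Fin.card_Iio] using Finset.card_le_card this

theorem Fin.exists_eq_ite_of_monotone {β : Type*} [PartialOrder β] {m : ℕ} {f : Fin m → β}
    (hf : Monotone f) {a b c : β} (hab : a ≤ b) (hcb : ¬ c ≤ b)
    (hrange : ∀ i, f i = a ∨ f i = b ∨ f i = c) :
    ∃ l₀ l₁ l₂ : ℕ, l₀ + l₁ + l₂ = m ∧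
      ∀ i : Fin m, f i = if (i : ℕ) < l₀ then a else if (i : ℕ) < l₀ + l₁ then b else c := by
  obtain ⟨l, hlm, hl⟩ := Fin.exists_iff_lt_of_isLowerSet ((isLowerSet_Iic a).preimage hf)
  obtain ⟨l', hlm', hl'⟩ := Fin.exists_iff_lt_of_isLowerSet ((isLowerSet_Iic b).preimage hf)
  have hll' : l ≤ l' := by
    by_contra! h
    have hi := (hl ⟨l', by omega⟩).2 h
    exact (lt_irrefl l') ((hl' _).1 (le_trans hi hab))
  refine ⟨l, l' - l, m - l', by omega, fun i => ?_⟩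
  have eq_a : f i ≤ a → f i = a := fun h => by
    rcases hrange i with e | e | e
    · exact e
    · exact e.trans (le_antisymm (e ▸ h) hab)
    · exact absurd ((e ▸ h).trans hab) hcb
  have eq_b : f i ≤ b → ¬ f i ≤ a → f i = b := fun h h' => by
    rcases hrange i with e | e | e
    · exact absurd (e ▸ le_rfl) h'
    · exact e
    · exact absurd (e ▸ h) hcb
  have eq_c : ¬ f i ≤ b → f i = c := fun h => by
    rcases hrange i with e | e | e
    · exact absurd (e ▸ hab) h
    · exact absurd (e ▸ le_rfl) h
    · exact e
  rw [Nat.add_sub_cancel' hll']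
  split_ifs with h h'
  · exact eq_a ((hl i).2 h)
  · exact eq_b ((hl' i).2 h') (mt (hl i).1 h)
  · exact eq_c (mt (hl' i).1 h')

theorem CovBy.lt_of_isLUB_pair {β : Type*} [PartialOrder β] {a b c s : β} (ha : c ⋖ a)
    (hb : c ⋖ b) (hab : a ≠ b) (hs : IsLUB {a, b} s) : a < s := by
  refine (hs.1 (Set.mem_insert _ _)).lt_of_ne fun has => hab ?_
  have hba : b ≤ a := has ▸ hs.1 (Set.mem_insert_of_mem _ rfl)
  exact ((ha.wcovBy.eq_or_eq hb.le hba).resolve_left hb.ne').symm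

section WCovBy

variable {α : Type*} [PartialOrder α] [OrderBot α]

theorem le_of_eq_bot_or_wcovBy {x y : α} (h : x = ⊥ ∨ x ⩿ y) : x ≤ y := by
  rcases h with rfl | h
  exacts [bot_le, h.le]

theorem eq_bot_or_wcovBy_of_le_of_isGLB {x₁ x₂ y₂ c : α} (hx : x₁ = ⊥ ∨ x₁ ⩿ x₂) (hy : x₁ ≤ y₂)
    (hc : IsGLB {x₂, y₂} c) : x₁ = ⊥ ∨ x₁ ⩿ c := by
  refine hx.imp_right fun h => h.of_le_of_le' (hc.1 (Set.mem_insert _ _)) ?_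
  exact hc.2 fun z hz => by rcases hz with rfl | rfl; exacts [h.le, hy]

theorem eq_bot_or_wcovBy_of_isGLB {x₁ x₂ y₁ y₂ c₁ c₂ : α} (hx : x₁ = ⊥ ∨ x₁ ⩿ x₂)
    (hy : y₁ = ⊥ ∨ y₁ ⩿ y₂) (hc₁ : IsGLB {x₁, y₁} c₁) (hc₁' : c₁ = ⊥ ∨ c₁ = x₁ ∨ c₁ = y₁)
    (hc₂ : IsGLB {x₂, y₂} c₂) : c₁ = ⊥ ∨ c₁ ⩿ c₂ := by
  rcases hc₁' with h | rfl | rfl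
  · exact Or.inl h
  · exact eq_bot_or_wcovBy_of_le_of_isGLB hx
      ((hc₁.1 (by simp)).trans (le_of_eq_bot_or_wcovBy hy)) hc₂
  · rw [Set.pair_comm] at hc₂
    exact eq_bot_or_wcovBy_of_le_of_isGLB hy
      ((hc₁.1 (by simp)).trans (le_of_eq_bot_or_wcovBy hx)) hc₂

end WCovBy

theorem IsLatticeOrder.of_orderIso {β γ : Type*} [PartialOrder β] [PartialOrder γ] (e : β ≃o γ)
    (h : IsLatticeOrder β) : IsLatticeOrder γ := by
  refine ⟨fun a b => ?_, fun a b => ?_⟩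
  · obtain ⟨c, hc⟩ := h.1 (e.symm a) (e.symm b)
    exact ⟨e c, by simpa [Set.image_pair] using e.isLUB_image'.2 hc⟩
  · obtain ⟨c, hc⟩ := h.2 (e.symm a) (e.symm b)
    exact ⟨e c, by simpa [Set.image_pair] using e.isGLB_image'.2 hc⟩

section MCover

variable {α : Type*} [PartialOrder α] [OrderBot α] {m : ℕ}

theorem IsMCoverTuple.eq_bot_or_wcovBy {f : Fin m → α} (hf : IsMCoverTuple m f) {i j : Fin m}
    (hij : i ≤ j) : f i = ⊥ ∨ f i ⩿ f j := by
  obtain ⟨l₀, l₁, l₂, p₁, p₂, -, hp, hf⟩ := hf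
  have hij' : (i : ℕ) ≤ j := hij
  rw [hf i, hf j]
  split_ifs <;>
    first | exact Or.inl rfl | exact Or.inr (WCovBy.refl _) | exact Or.inr hp.wcovBy | omega

theorem exists_covBy_of_forall_eq_bot_or_wcovBy [Finite α] (hcov : ∃ p q : α, p ⋖ q)
    {f : Fin m → α} (hf : ∀ i j, i ≤ j → f i = ⊥ ∨ f i ⩿ f j) :
    ∃ p₁ p₂ : α, p₁ ⋖ p₂ ∧ ∀ i, f i = ⊥ ∨ f i = p₁ ∨ f i = p₂ := by
  obtain ⟨p, q, hpq⟩ := hcov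
  have hmono : Monotone f := fun i j hij => le_of_eq_bot_or_wcovBy (hf i j hij)
  cases m with
  | zero => exact ⟨p, q, hpq, fun i => i.elim0⟩
  | succ n =>
    set p₂ := f (Fin.last n)
    have covBy_p₂ : ∀ {i}, f i ≠ ⊥ → f i ≠ p₂ → f i ⋖ p₂ := fun hi hi' =>
      ((hf _ _ (Fin.le_last _)).resolve_left hi).covBy_of_ne hi'
    by_cases hmid : ∃ i, f i ≠ ⊥ ∧ f i ≠ p₂
    · obtain ⟨i, hi, hi'⟩ := hmid
      refine ⟨f i, p₂, covBy_p₂ hi hi', fun j => ?_⟩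
      by_cases hj : f j = ⊥ ∨ f j = p₂
      · tauto
      push Not at hj
      refine Or.inr (Or.inl ?_)
      rcases (le_total i j).imp (@hmono i j) (@hmono j i) with h | h
      · exact ((covBy_p₂ hi hi').wcovBy.eq_or_eq h (hmono (Fin.le_last j))).resolve_right hj.2
      · exact (((covBy_p₂ hj.1 hj.2).wcovBy.eq_or_eq h (hmono (Fin.le_last i))).resolve_right
          hi').symm
    · push Not at hmid
      rcases eq_or_ne p₂ ⊥ with h₂ | h₂
      · exact ⟨p, q, hpq, fun i => Or.inl (by_contra fun hi => hi (h₂ ▸ hmid i hi))⟩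
      · obtain ⟨p₁, -, hp₁⟩ := exists_le_covBy_of_lt (bot_lt_iff_ne_bot.2 h₂)
        exact ⟨p₁, p₂, hp₁, fun i => (em (f i = ⊥)).imp_right fun hi => Or.inr (hmid i hi)⟩

theorem IsMCoverTuple.of_forall_eq_bot_or_wcovBy [Finite α] (hcov : ∃ p q : α, p ⋖ q)
    {f : Fin m → α} (hf : ∀ i j, i ≤ j → f i = ⊥ ∨ f i ⩿ f j) : IsMCoverTuple m f := by
  obtain ⟨p₁, p₂, hp, hrange⟩ := exists_covBy_of_forall_eq_bot_or_wcovBy hcov hf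
  obtain ⟨l₀, l₁, l₂, hsum, hl⟩ := Fin.exists_eq_ite_of_monotone
    (fun i j hij => le_of_eq_bot_or_wcovBy (hf i j hij)) bot_le hp.lt.not_ge hrange
  exact ⟨l₀, l₁, l₂, p₁, p₂, hsum, hp, hl⟩

theorem isMCoverTuple_const [Finite α] (hcov : ∃ p q : α, p ⋖ q) (a : α) :
    IsMCoverTuple m fun _ => a :=
  .of_forall_eq_bot_or_wcovBy hcov fun _ _ _ => Or.inr (WCovBy.refl a)

theorem isMCoverTuple_one [Finite α] (hcov : ∃ p q : α, p ⋖ q) (f : Fin 1 → α) :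
    IsMCoverTuple 1 f :=
  .of_forall_eq_bot_or_wcovBy hcov fun i j _ => Or.inr (Subsingleton.elim i j ▸ WCovBy.refl _)

theorem isMCoverTuple_two_of_covBy {x y : α} (h : x ⋖ y) : IsMCoverTuple 2 ![x, y] :=
  ⟨0, 1, 1, x, y, rfl, h, fun i => by fin_cases i <;> rfl⟩

def MCover.oneOrderIso [Finite α] (hcov : ∃ p q : α, p ⋖ q) : MCover α 1 ≃o α :=
  (OrderIso.setCongr {f | IsMCoverTuple 1 f} Set.univ
    (Set.eq_univ_of_forall (isMCoverTuple_one hcov))).trans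
    (OrderIso.Set.univ.trans (OrderIso.funUnique (Fin 1) α))


theorem MCover.exists_isGLB [Finite α]
    (hinf : ∀ a b : α, ∃ c, IsGLB {a, b} c ∧ (c = ⊥ ∨ c = a ∨ c = b)) (u v : MCover α m) :
    ∃ w, IsGLB {u, v} w := by
  choose g hg hg' using hinf
  obtain ⟨-, -, -, p, q, -, hpq, -⟩ := u.2
  have hw : IsMCoverTuple m fun i => g (u.1 i) (v.1 i) :=
    .of_forall_eq_bot_or_wcovBy ⟨p, q, hpq⟩ fun i j hij => eq_bot_or_wcovBy_of_isGLB
      (u.2.eq_bot_or_wcovBy hij) (v.2.eq_bot_or_wcovBy hij) (hg _ _) (hg' _ _) (hg _ _)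
  refine ⟨⟨_, hw⟩, ?_, fun t ht i => (hg _ _).2 ?_⟩
  · rintro _ (rfl | rfl) i
    exacts [(hg _ _).1 (Set.mem_insert _ _), (hg _ _).1 (Set.mem_insert_of_mem _ rfl)]
  · rintro _ (rfl | rfl)
    exacts [ht (Set.mem_insert _ _) i, ht (Set.mem_insert_of_mem _ rfl) i]

theorem MCover.isLatticeOrder [Finite α] [OrderTop α]
    (hinf : ∀ a b : α, ∃ c, IsGLB {a, b} c ∧ (c = ⊥ ∨ c = a ∨ c = b)) :
    IsLatticeOrder (MCover α m) := by
  refine ⟨fun u v => exists_isLUB_of_upperBounds_nonempty (MCover.exists_isGLB hinf) ?_,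
    MCover.exists_isGLB hinf⟩
  obtain ⟨-, -, -, p, q, -, hpq, -⟩ := u.2
  exact ⟨⟨fun _ => ⊤, isMCoverTuple_const ⟨p, q, hpq⟩ ⊤⟩, by
    rintro _ (rfl | rfl) i <;> exact le_top⟩

theorem MCover.not_isLUB_of_covBy [Finite α] {c a b s : α} (hc : c ≠ ⊥) (ha : c ⋖ a) (hb : c ⋖ b)
    (hab : a ≠ b) (hs : IsLUB {a, b} s) (w : MCover α 2) :
    ¬ IsLUB {⟨![c, a], isMCoverTuple_two_of_covBy ha⟩,
      ⟨![c, b], isMCoverTuple_two_of_covBy hb⟩} w := by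
  intro hw
  obtain ⟨x, hax, hxs⟩ := exists_le_covBy_of_lt (ha.lt_of_isLUB_pair hb hab hs)
  obtain ⟨y, hby, hys⟩ :=
    exists_le_covBy_of_lt (hb.lt_of_isLUB_pair ha hab.symm (Set.pair_comm a b ▸ hs))
  have hwu := hw.1 (Set.mem_insert _ _)
  have hwv := hw.1 (Set.mem_insert_of_mem _ rfl)
  have le_of_covBy : ∀ {z}, c ≤ z → z ⋖ s → w.1 0 ≤ z ∧ w.1 1 ≤ s := by
    intro z hcz hzs
    have hle : w ≤ ⟨![z, s], isMCoverTuple_two_of_covBy hzs⟩ := hw.2 (by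
      rintro _ (rfl | rfl) i <;> fin_cases i
      exacts [hcz, hs.1 (Set.mem_insert _ _), hcz, hs.1 (Set.mem_insert_of_mem _ rfl)])
    exact ⟨hle 0, hle 1⟩
  obtain ⟨hwx, hws⟩ := le_of_covBy (ha.le.trans hax) hxs
  obtain ⟨hwy, -⟩ := le_of_covBy (hb.le.trans hby) hys
  have hw₁ : w.1 1 = s := hws.antisymm (hs.2 (by
    rintro _ (rfl | rfl)
    exacts [hwu 1, hwv 1]))
  have hw₀ : w.1 0 ⩿ s := hw₁ ▸ (w.2.eq_bot_or_wcovBy (Fin.zero_le 1)).resolve_left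
    (ne_bot_of_le_ne_bot hc (hwu 0))
  have hx : x = w.1 0 := (hw₀.eq_or_eq hwx hxs.le).resolve_right hxs.ne
  have hy : y = w.1 0 := (hw₀.eq_or_eq hwy hys.le).resolve_right hys.ne
  refine hxs.lt.not_ge (hs.2 ?_)
  rintro _ (rfl | rfl)
  exacts [hax, hx ▸ hy ▸ hby]

theorem eq_bot_or_eq_or_eq_of_isGLB [Finite α] (hsup : ∀ a b : α, ∃ s, IsLUB {a, b} s)
    (h2 : ∀ u v : MCover α 2, ∃ w, IsLUB {u, v} w) {a b c : α} (hc : IsGLB {a, b} c) :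
    c = ⊥ ∨ c = a ∨ c = b := by
  have hca : c ≤ a := hc.1 (Set.mem_insert _ _)
  have hcb : c ≤ b := hc.1 (Set.mem_insert_of_mem _ rfl)
  have le_c : ∀ {z}, z ≤ a → z ≤ b → z ≤ c := fun hza hzb =>
    hc.2 (by rintro _ (rfl | rfl); exacts [hza, hzb])
  by_cases hab : a ≤ b
  · exact Or.inr (Or.inl (hca.antisymm (le_c le_rfl hab)))
  by_cases hba : b ≤ a
  · exact Or.inr (Or.inr (hcb.antisymm (le_c hba le_rfl)))
  refine or_iff_not_imp_left.2 fun hc₀ => ?_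
  obtain ⟨a', hca', ha'⟩ := exists_covBy_le_of_lt (hca.lt_of_ne fun h => hab (h ▸ hcb))
  obtain ⟨b', hcb', hb'⟩ := exists_covBy_le_of_lt (hcb.lt_of_ne fun h => hba (h ▸ hca))
  have hne : a' ≠ b' := fun h => hca'.lt.not_ge (le_c ha' (h ▸ hb'))
  obtain ⟨s, hs⟩ := hsup a' b'
  obtain ⟨w, hw⟩ := h2 ⟨_, isMCoverTuple_two_of_covBy hca'⟩ ⟨_, isMCoverTuple_two_of_covBy hcb'⟩
  exact absurd hw (MCover.not_isLUB_of_covBy hc₀ hca' hcb' hne hs w)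

end MCover

/-- The m-cover poset `P^⟨m⟩` is a lattice for every `m > 0` if and only if `P` is a
lattice in which the meet of any two elements belongs to `{⊥, p, q}`. -/
theorem stmt_0 {α : Type*} [Fintype α] [PartialOrder α] [BoundedOrder α] :
    (∀ m : ℕ, 0 < m → IsLatticeOrder (MCover α m)) ↔
      ((∀ a b : α, ∃ c, IsLUB {a, b} c) ∧
        (∀ a b : α, ∃ c, IsGLB {a, b} c ∧ (c = ⊥ ∨ c = a ∨ c = b))) := by
  refine ⟨fun h => ?_, fun ⟨_, hinf⟩ m _ => MCover.isLatticeOrder hinf⟩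
  rcases subsingleton_or_nontrivial α with hα | hα
  · exact ⟨fun a b => ⟨a, by simp [Subsingleton.elim b a]⟩,
      fun a b => ⟨a, by simp [Subsingleton.elim b a], Or.inr (Or.inl rfl)⟩⟩
  obtain ⟨a, ha⟩ := exists_ne (⊥ : α)
  obtain ⟨x, hx, -⟩ := exists_covBy_le_of_lt (bot_lt_iff_ne_bot.2 ha)
  obtain ⟨hsup, hinf⟩ := (h 1 one_pos).of_orderIso (MCover.oneOrderIso ⟨⊥, x, hx⟩)
  exact ⟨hsup, fun a b => (hinf a b).imp fun c hc =>
    ⟨hc, eq_bot_or_eq_or_eq_of_isGLB hsup (h 2 two_pos).1 hc⟩⟩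
end

section
/- Let P be a finite bounded poset and let m > 0 be an integer. Then ℓ(P^⟨m⟩) = m·ℓ(P), where ℓ denotes the length of a finite bounded poset, i.e., the maximum length of a chain from its least to its greatest element. -/
/-- An element is join-irreducible: non-minimal with exactly one lower cover. -/
def JoinIrred {β : Type*} [PartialOrder β] (x : β) : Prop :=
  (∃ y, y < x) ∧ ∃! y, y ⋖ x

/-- An element is meet-irreducible: non-maximal with exactly one upper cover. -/
def MeetIrred {β : Type*} [PartialOrder β] (x : β) : Prop :=
  (∃ y, x < y) ∧ ∃! y, x ⋖ y

/-- The length of a bounded poset: the maximum length of a chain from the least element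
to the greatest element. -/
noncomputable def posetLength (β : Type*) [PartialOrder β] : ℕ :=
  sSup {n : ℕ | ∃ f : Fin (n + 1) → β, StrictMono f ∧ IsBot (f 0) ∧ IsTop (f (Fin.last n))}

/-- A bounded poset is extremal if its numbers of join-irreducible and of meet-irreducible
elements both equal its length. -/
def Extremal (β : Type*) [PartialOrder β] : Prop :=
  Nat.card {x : β // JoinIrred x} = posetLength β ∧
  Nat.card {x : β // MeetIrred x} = posetLength β

/-!
Write `L` for the height of `⊤` in `α`. The rank `g ↦ ∑ j, height (g j)` is strictly monotone on
`Fin m → α` and bounded by `m * L`, so no chain of `MCover α m` is longer than `m * L`.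
Conversely, along a maximal chain `⊥ = c₀ ⋖ c₁ ⋖ ⋯ ⋖ c_L = ⊤` the tuples `(c_k^(m-s), c_(k+1)^s)`,
`0 ≤ s ≤ m`, lie in `MCover α m` and climb from `(c_k^m)` to `(c_(k+1)^m)` in `m` strict steps,
so the top tuple `(⊤^m)` has height at least `m * L`.
-/

open Order

section PosetLength

variable {β : Type*} [PartialOrder β]

lemma posetLength_le_of_forall_length_le {n : ℕ} (h : ∀ q : LTSeries β, q.length ≤ n) :
    posetLength β ≤ n :=
  csSup_le' fun _ ⟨f, hf, _⟩ => h (LTSeries.mk _ f hf)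

lemma LTSeries.head_eq_of_isBot {q : LTSeries β} (hq : ∀ q' : LTSeries β, q'.length ≤ q.length)
    {b : β} (hb : IsBot b) : q.head = b := by
  by_contra hne
  have := hq (q.cons b ((hb q.head).lt_of_ne (Ne.symm hne)))
  simp at this

lemma posetLength_eq_of_isBot_of_isTop {b t : β} (hb : IsBot b) (ht : IsTop t) {n : ℕ}
    (hle : ∀ q : LTSeries β, q.length ≤ n) (hn : (n : ℕ∞) ≤ height t) : posetLength β = n := by
  obtain ⟨q, hlast, rfl⟩ := exists_series_of_le_height t hn
  have hhead : q.head = b := q.head_eq_of_isBot hle hb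
  refine le_antisymm (posetLength_le_of_forall_length_le hle) (le_csSup ?_ ?_)
  · exact ⟨q.length, fun _ ⟨f, hf, _⟩ => hle (LTSeries.mk _ f hf)⟩
  · rw [← hhead] at hb
    rw [← hlast] at ht
    exact ⟨q, q.strictMono, hb, ht⟩

end PosetLength

section FiniteHeight

variable {α : Type*} [PartialOrder α] [Fintype α]

lemma Order.height_le_card (a : α) : height a ≤ Fintype.card α :=
  height_le fun q _ => by exact_mod_cast q.length_lt_card.le

lemma Order.height_ne_top_of_fintype (a : α) : height a ≠ ⊤ :=
  ((height_le_card a).trans_lt (ENat.natCast_lt_top _)).ne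

lemma Order.strictMono_toNat_height : StrictMono fun a : α => (height a).toNat := by
  intro a b hab
  have := height_strictMono hab (height_ne_top_of_fintype a).lt_top
  rwa [← ENat.natCast_toNat (height_ne_top_of_fintype a),
    ← ENat.natCast_toNat (height_ne_top_of_fintype b), Nat.cast_lt] at this

variable [BoundedOrder α]

lemma LTSeries.length_le_toNat_height_top (q : LTSeries α) : q.length ≤ (height (⊤ : α)).toNat :=
  ENat.toNat_le_toNat (length_le_height le_top) (height_ne_top_of_fintype _)

lemma posetLength_eq_toNat_height_top : posetLength α = (height (⊤ : α)).toNat :=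
  posetLength_eq_of_isBot_of_isTop isBot_bot isTop_top LTSeries.length_le_toNat_height_top
    (ENat.natCast_toNat_le_self _)

end FiniteHeight

section Product

variable {ι α : Type*} [Fintype ι] [PartialOrder α] [Fintype α] [BoundedOrder α]

lemma LTSeries.length_le_card_mul_toNat_height_top (q : LTSeries (ι → α)) :
    q.length ≤ Fintype.card ι * (height (⊤ : α)).toNat := by
  set rank : (ι → α) → ℕ := fun g => ∑ i, (height (g i)).toNat
  have hrank : StrictMono rank := by
    intro g g' hlt
    obtain ⟨hle, i, hi⟩ := Pi.lt_def.mp hlt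
    exact Finset.sum_lt_sum (fun j _ => strictMono_toNat_height.monotone (hle j))
      ⟨i, Finset.mem_univ _, strictMono_toNat_height hi⟩
  have hbound : rank q.last ≤ Fintype.card ι * (height (⊤ : α)).toNat := by
    simpa using Finset.sum_le_sum fun i (_ : i ∈ Finset.univ) =>
      strictMono_toNat_height.monotone (le_top : q.last i ≤ ⊤)
  have := (q.map rank hrank).head_add_length_le_nat
  simp only [LTSeries.map_length, LTSeries.last_map] at this
  omega

end Product

section CoverSeries

variable {α : Type*} [PartialOrder α] [Fintype α] [BoundedOrder α]

lemma exists_covBy_relSeries_last_eq_top : ∃ c : RelSeries {(a, b) : α × α | a ⋖ b},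
    c.last = ⊤ ∧ (height (⊤ : α)).toNat ≤ c.length := by
  obtain ⟨s, -, hs⟩ := exists_series_of_le_height (⊤ : α) (ENat.natCast_toNat_le_self _)
  obtain ⟨c, i, -, -, hlast⟩ := s.exists_relSeries_covBy_and_head_eq_bot_and_last_eq_bot
  refine ⟨c, hlast, ?_⟩
  simpa [hs] using Fintype.card_le_of_embedding i

end CoverSeries

namespace MCover

/-- The tuple `(a^(m - s), b^s)`. -/
def coverBlock {α : Type*} (m : ℕ) (a b : α) (s : ℕ) : Fin m → α :=
  fun j => if (j : ℕ) + s < m then a else b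

lemma coverBlock_zero {α : Type*} {m : ℕ} (a b : α) : coverBlock m a b 0 = fun _ => a :=
  funext fun j => if_pos (by simp)

lemma coverBlock_self {α : Type*} {m : ℕ} (a b : α) : coverBlock m a b m = fun _ => b :=
  funext fun j => if_neg (by simp)

variable {α : Type*} [PartialOrder α] {m : ℕ}

lemma coverBlock_lt_succ {a b : α} (hab : a < b) {s : ℕ} (hs : s < m) :
    coverBlock m a b s < coverBlock m a b (s + 1) := by
  refine Pi.lt_def.mpr ⟨fun j => ?_, ⟨m - 1 - s, by omega⟩, ?_⟩ <;> dsimp only [coverBlock]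
  · split_ifs <;> first | exact le_rfl | exact hab.le | omega
  · rw [if_pos (by omega), if_neg (by omega)]
    exact hab

section OrderBot

variable [OrderBot α]

lemma isMCoverTuple_coverBlock {a b : α} (hab : a ⋖ b) {s : ℕ} (hs : s ≤ m) :
    IsMCoverTuple m (coverBlock m a b s) := by
  refine ⟨0, m - s, s, a, b, by omega, hab, fun j => ?_⟩
  simp only [coverBlock, Nat.not_lt_zero, if_false, zero_add]
  split_ifs <;> first | rfl | omega

lemma isMCoverTuple_const_left {a b : α} (hab : a ⋖ b) : IsMCoverTuple m fun _ => a :=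
  coverBlock_zero (m := m) a b ▸ isMCoverTuple_coverBlock hab (Nat.zero_le m)

lemma isMCoverTuple_const_right {a b : α} (hab : a ⋖ b) : IsMCoverTuple m fun _ => b :=
  coverBlock_self (m := m) a b ▸ isMCoverTuple_coverBlock hab le_rfl

lemma height_const_add_le_height_const {a b : α} (hab : a ⋖ b) :
    height (⟨fun _ => a, isMCoverTuple_const_left hab⟩ : MCover α m) + m ≤
      height (⟨fun _ => b, isMCoverTuple_const_right hab⟩ : MCover α m) := by
  have hclimb : ∀ s (hs : s ≤ m), height (⟨fun _ => a, isMCoverTuple_const_left hab⟩ : MCover α m)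
      + s ≤ height (⟨coverBlock m a b s, isMCoverTuple_coverBlock hab hs⟩ : MCover α m) := by
    intro s
    induction s with
    | zero => intro _; simp [coverBlock_zero]
    | succ s ih =>
      intro hs
      calc _ = _ + (s : ℕ∞) + 1 := by push_cast; ring
        _ ≤ height (⟨coverBlock m a b s, isMCoverTuple_coverBlock hab (by omega)⟩ : MCover α m)
            + 1 := by gcongr; exact ih (by omega)
        _ ≤ _ := height_add_one_le (Subtype.mk_lt_mk.mpr (coverBlock_lt_succ hab.lt hs))
  simpa [coverBlock_self] using hclimb m le_rfl

lemma mul_index_le_height (c : RelSeries {(a, b) : α × α | a ⋖ b})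
    (i : Fin (c.length + 1)) (x : MCover α m) (hx : x.val = fun _ => c i) :
    ((m * i : ℕ) : ℕ∞) ≤ height x := by
  induction i using Fin.induction generalizing x with
  | zero => simp
  | succ i ih =>
    have hcov : c i.castSucc ⋖ c i.succ := c.step i
    obtain rfl : x = ⟨_, isMCoverTuple_const_right hcov⟩ := Subtype.ext hx
    calc ((m * (i.succ : ℕ) : ℕ) : ℕ∞) = ((m * (i.castSucc : ℕ) : ℕ) : ℕ∞) + m := by
          simp [mul_add]
      _ ≤ _ := by gcongr; exact ih _ rfl
      _ ≤ _ := height_const_add_le_height_const hcov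

end OrderBot

lemma length_le [Fintype α] [BoundedOrder α] (q : LTSeries (MCover α m)) :
    q.length ≤ m * (height (⊤ : α)).toNat := by
  simpa using (q.map Subtype.val (Subtype.strictMono_coe _)).length_le_card_mul_toNat_height_top

end MCover

theorem stmt_5_general {α : Type*} [Fintype α] [PartialOrder α] [BoundedOrder α]
    (m : ℕ) :
    posetLength (MCover α m) = m * posetLength α := by
  rw [posetLength_eq_toNat_height_top (α := α)]
  refine le_antisymm (posetLength_le_of_forall_length_le MCover.length_le) ?_
  rcases (bot_le : (⊥ : α) ≤ ⊤).eq_or_lt with hbt | hbt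
  · simp [← hbt]
  obtain ⟨a, hbot, -⟩ := exists_covBy_le_of_lt hbt
  obtain ⟨b, -, htop⟩ := exists_le_covBy_of_lt hbt
  obtain ⟨c, hlast, hlen⟩ := exists_covBy_relSeries_last_eq_top (α := α)
  refine (posetLength_eq_of_isBot_of_isTop (b := ⟨_, MCover.isMCoverTuple_const_left hbot⟩)
    (t := ⟨_, MCover.isMCoverTuple_const_right htop⟩)
    (fun _ => Subtype.mk_le_mk.mpr fun _ => bot_le) (fun _ => Subtype.mk_le_mk.mpr fun _ => le_top)
    MCover.length_le ?_).ge
  calc ((m * (height (⊤ : α)).toNat : ℕ) : ℕ∞) ≤ ((m * c.length : ℕ) : ℕ∞) := by gcongr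
    _ ≤ _ := MCover.mul_index_le_height c (Fin.last _) _ (funext fun _ => hlast.symm)

/-- The length of the m-cover poset is `m` times the length of `P`. -/
theorem stmt_5 {α : Type*} [Fintype α] [PartialOrder α] [BoundedOrder α]
    (m : ℕ) (hm : 0 < m) :
    posetLength (MCover α m) = m * posetLength α :=
  stmt_5_general m
end

section
/- Let P be a finite bounded poset and let m > 0 be an integer. The join-irreducible elements of the m-cover poset P^⟨m⟩ are exactly the tuples (0̂^l, p^{m−l}) with p ∈ J(P) and 0 ≤ l < m. -/
/-!
In a finite poset, `x` is join-irreducible iff the elements strictly below `x` have a greatest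
element. In `P^⟨m⟩` a tuple `(0̂^l₀, p₁^l₁, p₂^l₂)` with `l₁, l₂ > 0` and `p₁ ≠ 0̂` is the
pointwise maximum of the two smaller tuples obtained by moving one block boundary by one
position, so no element strictly below it lies above both. For `x = (0̂^l, p^(m-l))`, every
`z < x` has `z_l < p`, since tuples are monotone; hence if `q` is the unique lower cover of `p`,
the tuple `(0̂^l, q, p^(m-l-1))` is the greatest element below `x`, and conversely the `l`-th
entry of the greatest element below `x` is the greatest element below `p`.
-/

section JoinIrred

variable {β : Type*} [PartialOrder β] {x c : β}

theorem covBy_of_lt_of_forall_lt_le (hcx : c < x) (hmax : ∀ y < x, y ≤ c) : c ⋖ x :=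
  ⟨hcx, fun z hcz hzx => (hcz.trans_le (hmax z hzx)).false⟩

theorem joinIrred_iff_exists_lt_forall_lt_le [IsStronglyCoatomic β] :
    JoinIrred x ↔ ∃ c < x, ∀ y < x, y ≤ c := by
  constructor
  · rintro ⟨-, c, hc, huniq⟩
    refine ⟨c, hc.lt, fun y hy => ?_⟩
    obtain ⟨d, hyd, hd⟩ := exists_le_covBy_of_lt hy
    exact huniq d hd ▸ hyd
  · rintro ⟨c, hcx, hmax⟩
    refine ⟨⟨c, hcx⟩, c, covBy_of_lt_of_forall_lt_le hcx hmax, fun d hd => ?_⟩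
    exact (hmax d hd.lt).eq_of_not_lt fun hdc => hd.2 hdc hcx

end JoinIrred

section

variable {α : Type*} [PartialOrder α] [OrderBot α] {m : ℕ}

theorem isMCoverTuple_blocks {l₀ l₁ : ℕ} (h : l₀ + l₁ ≤ m) {p₁ p₂ : α} (hp : p₁ ⋖ p₂) :
    IsMCoverTuple m fun i : Fin m =>
      if (i : ℕ) < l₀ then ⊥ else if (i : ℕ) < l₀ + l₁ then p₁ else p₂ :=
  ⟨l₀, l₁, m - (l₀ + l₁), p₁, p₂, by omega, hp, fun _ => rfl⟩

theorem IsMCoverTuple.monotone {f : Fin m → α} (hf : IsMCoverTuple m f) : Monotone f := by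
  obtain ⟨l₀, l₁, l₂, p₁, p₂, -, hp, hf⟩ := hf
  intro i j (hij : (i : ℕ) ≤ j)
  rw [hf i, hf j]
  split_ifs <;> first | exact le_rfl | exact bot_le | exact hp.le | omega

namespace MCover

theorem lt_of_le_of_apply_ne {x y : MCover α m} (hle : ∀ i, y.1 i ≤ x.1 i) (i : Fin m)
    (hne : y.1 i ≠ x.1 i) : y < x :=
  lt_of_le_of_ne hle fun h => hne (congrFun (congrArg Subtype.val h) i)

variable {x z : MCover α m} {l : ℕ} {p : α}

theorem bot_prefix_lt_of_lt (hx : ∀ i : Fin m, x.1 i = if (i : ℕ) < l then ⊥ else p)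
    (hzx : z < x) : l < m := by
  by_contra! hml
  refine hzx.not_ge fun i => ?_
  rw [hx i, if_pos (by omega)]
  exact bot_le

theorem apply_lt_of_lt (hx : ∀ i : Fin m, x.1 i = if (i : ℕ) < l then ⊥ else p) (hl : l < m)
    (hzx : z < x) : z.1 ⟨l, hl⟩ < p := by
  have hle : z.1 ⟨l, hl⟩ ≤ p := by simpa [hx] using hzx.le ⟨l, hl⟩
  refine hle.lt_of_ne fun hzp => hzx.not_ge fun i => ?_
  rw [hx i]
  split_ifs with hi
  · exact bot_le
  · exact hzp ▸ z.2.monotone (show l ≤ (i : ℕ) by omega)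

def stepDown (l : ℕ) (hl : l < m) {p q : α} (hqp : q ⋖ p) : MCover α m :=
  ⟨fun i => if (i : ℕ) < l then ⊥ else if (i : ℕ) < l + 1 then q else p,
    isMCoverTuple_blocks (by omega) hqp⟩

variable {q : α}

theorem stepDown_apply_self (hl : l < m) (hqp : q ⋖ p) :
    (stepDown l hl hqp).1 ⟨l, hl⟩ = q := by
  simp [stepDown]

theorem stepDown_lt (hx : ∀ i : Fin m, x.1 i = if (i : ℕ) < l then ⊥ else p) (hl : l < m)
    (hqp : q ⋖ p) : stepDown l hl hqp < x := by
  refine lt_of_le_of_apply_ne (fun i => ?_) ⟨l, hl⟩ ?_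
  · rw [hx i]
    dsimp only [stepDown]
    split_ifs <;> first | exact le_rfl | exact hqp.le
  · simpa [stepDown_apply_self, hx] using hqp.ne

theorem le_stepDown (hx : ∀ i : Fin m, x.1 i = if (i : ℕ) < l then ⊥ else p) (hl : l < m)
    (hqp : q ⋖ p) (hmax : ∀ r < p, r ≤ q) (hzx : z < x) : z ≤ stepDown l hl hqp := by
  intro i
  have hzi := hzx.le i
  rw [hx i] at hzi
  dsimp only [stepDown]
  split_ifs at hzi ⊢ with h₁ h₂
  · exact hzi
  · obtain rfl : i = ⟨l, hl⟩ := Fin.ext (show (i : ℕ) = l by omega)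
    exact hmax _ (apply_lt_of_lt hx hl hzx)
  · exact hzi

theorem exists_eq_ite_of_lt_of_forall_lt_le {c : MCover α m} (hcx : c < x)
    (hmax : ∀ y < x, y ≤ c) : ∃ l p, ∀ i : Fin m, x.1 i = if (i : ℕ) < l then ⊥ else p := by
  obtain ⟨L₀, L₁, L₂, p₁, p₂, hsum, hp, hx⟩ := x.2
  by_cases h₂ : L₂ = 0
  · refine ⟨L₀, p₁, fun i => ?_⟩
    rw [hx i]
    split_ifs <;> first | rfl | omega
  by_cases h₁ : L₁ = 0 ∨ p₁ = ⊥
  · refine ⟨L₀ + L₁, p₂, fun i => ?_⟩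
    rw [hx i]
    split_ifs <;> first | rfl | omega | exact h₁.resolve_left (by omega)
  obtain ⟨hL₁, hp₁⟩ := not_or.mp h₁
  let y₁ : MCover α m := ⟨_, isMCoverTuple_blocks (l₀ := L₀) (l₁ := L₁ + 1) (by omega) hp⟩
  let y₂ : MCover α m := ⟨_, isMCoverTuple_blocks (l₀ := L₀ + 1) (l₁ := L₁ - 1) (by omega) hp⟩
  have hy₁ : y₁ < x := by
    refine lt_of_le_of_apply_ne (fun i => ?_) ⟨L₀ + L₁, by omega⟩ ?_
    · rw [hx i]
      dsimp only [y₁]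
      split_ifs <;> first | exact le_rfl | exact hp.le | omega
    · simpa [y₁, hx] using hp.ne
  have hy₂ : y₂ < x := by
    refine lt_of_le_of_apply_ne (fun i => ?_) ⟨L₀, by omega⟩ ?_
    · rw [hx i]
      dsimp only [y₂]
      split_ifs <;> first | exact le_rfl | exact bot_le | omega
    · simpa [y₂, hx, Nat.pos_of_ne_zero hL₁] using Ne.symm hp₁
  have hxy : ∀ i, x.1 i = y₁.1 i ∨ x.1 i = y₂.1 i := by
    intro i
    rw [hx i]
    dsimp only [y₁, y₂]
    split_ifs <;> first | (left; rfl) | (right; rfl) | omega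
  refine absurd (fun i => ?_ : x ≤ c) hcx.not_ge
  rcases hxy i with h | h <;> rw [h]
  exacts [hmax y₁ hy₁ i, hmax y₂ hy₂ i]

end MCover

end

theorem stmt_7_general {α : Type*} [Fintype α] [PartialOrder α] [BoundedOrder α]
    (m : ℕ) (x : MCover α m) :
    JoinIrred x ↔
      ∃ (p : α) (l : ℕ), JoinIrred p ∧ l < m ∧
        ∀ i : Fin m, x.1 i = if (i : ℕ) < l then ⊥ else p := by
  constructor
  · intro hx
    obtain ⟨c, hcx, hmax⟩ := joinIrred_iff_exists_lt_forall_lt_le.mp hx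
    obtain ⟨l, p, hxl⟩ := MCover.exists_eq_ite_of_lt_of_forall_lt_le hcx hmax
    have hl := MCover.bot_prefix_lt_of_lt hxl hcx
    refine ⟨p, l, joinIrred_iff_exists_lt_forall_lt_le.mpr
      ⟨c.1 ⟨l, hl⟩, MCover.apply_lt_of_lt hxl hl hcx, fun r hr => ?_⟩, hl, hxl⟩
    obtain ⟨d, hrd, hdp⟩ := exists_le_covBy_of_lt hr
    calc r ≤ d := hrd
      _ = (MCover.stepDown l hl hdp).1 ⟨l, hl⟩ := (MCover.stepDown_apply_self hl hdp).symm
      _ ≤ c.1 ⟨l, hl⟩ := hmax _ (MCover.stepDown_lt hxl hl hdp) _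
  · rintro ⟨p, l, hp, hl, hxl⟩
    obtain ⟨q, hqp, hmax⟩ := joinIrred_iff_exists_lt_forall_lt_le.mp hp
    have hq := covBy_of_lt_of_forall_lt_le hqp hmax
    exact joinIrred_iff_exists_lt_forall_lt_le.mpr
      ⟨MCover.stepDown l hl hq, MCover.stepDown_lt hxl hl hq,
        fun _ hz => MCover.le_stepDown hxl hl hq hmax hz⟩

/-- The join-irreducible elements of the m-cover poset are exactly the tuples
`(⊥^l, p^{m−l})` with `p` join-irreducible in `P` and `0 ≤ l < m`. -/
theorem stmt_7 {α : Type*} [Fintype α] [PartialOrder α] [BoundedOrder α]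
    (m : ℕ) (hm : 0 < m) (x : MCover α m) :
    JoinIrred x ↔
      ∃ (p : α) (l : ℕ), JoinIrred p ∧ l < m ∧
        ∀ i : Fin m, x.1 i = if (i : ℕ) < l then ⊥ else p :=
  stmt_7_general m x
end

section
/- Let P be a finite bounded poset with n > 1 elements such that the m-cover poset P^⟨m⟩ is a lattice for every integer m > 0. Then |P^⟨m⟩| = n·C(m+1,2) − m² + 1 for every integer m > 0, where C(m+1,2) is the binomial coefficient (m+1) choose 2. -/
/-! If `P^⟨2⟩` is a lattice, no `p ≠ ⊥` has two distinct upper covers `q, r`: the join `(x, y)`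
of `(p, q)` and `(p, r)` lies below every upper bound `(t, y)` with `q ≤ t ⋖ y` or `r ≤ t ⋖ y`;
being itself a 2-cover tuple with `x ≠ ⊥`, this forces `x ⋖ y` and `q, r ≤ x`, and then `(x, x)`
is an upper bound not above the join. Hence the cover pairs `p ⋖ q` with `p ≠ ⊥` are in
bijection with `P ∖ {⊥, ⊤}`. Every element of `P^⟨m⟩` is, in exactly one way, the constant `⊥`,
a tuple `(⊥^a, x^(m-a))` with `x ≠ ⊥`, `a < m`, or a tuple `(⊥^a, p^(b-a), q^(m-b))` with
`p ≠ ⊥`, `p ⋖ q`, `a < b < m`; so `|P^⟨m⟩| = 1 + (n-1)·m + (n-2)·C(m,2)`, which is the claimed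
formula. -/

open Finset

section BlockTuple

variable {α : Type*} [PartialOrder α] [OrderBot α] {m a b : ℕ} {p q x : α}

def blockTuple (m : ℕ) (p q : α) (a b : ℕ) : Fin m → α :=
  fun i => if (i : ℕ) < a then ⊥ else if (i : ℕ) < b then p else q

lemma blockTuple_apply_of_lt {i : Fin m} (hi : (i : ℕ) < a) : blockTuple m p q a b i = ⊥ := by
  simp [blockTuple, hi]

lemma blockTuple_apply_of_le_of_lt {i : Fin m} (hai : a ≤ i) (hib : (i : ℕ) < b) :
    blockTuple m p q a b i = p := by
  simp [blockTuple, hai.not_gt, hib]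

lemma blockTuple_apply_of_le {i : Fin m} (hai : a ≤ i) (hbi : b ≤ i) :
    blockTuple m p q a b i = q := by
  simp [blockTuple, hai.not_gt, hbi.not_gt]

lemma blockTuple_eq_bot_iff (hp : p ≠ ⊥) (hq : q ≠ ⊥) (i : Fin m) :
    blockTuple m p q a b i = ⊥ ↔ (i : ℕ) < a := by
  unfold blockTuple
  split_ifs <;> simp_all

lemma blockTuple_eq_right_iff (hpq : p ≠ q) (hq : q ≠ ⊥) (hab : a ≤ b) (i : Fin m) :
    blockTuple m p q a b i = q ↔ b ≤ (i : ℕ) := by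
  unfold blockTuple
  split_ifs <;> simp [*, Ne.symm hq] <;> omega

lemma isMCoverTuple_iff_exists_blockTuple {f : Fin m → α} :
    IsMCoverTuple m f ↔
      ∃ (p q : α) (a b : ℕ), a ≤ b ∧ b ≤ m ∧ p ⋖ q ∧ f = blockTuple m p q a b := by
  constructor
  · rintro ⟨l₀, l₁, l₂, p, q, hsum, hpq, hf⟩
    exact ⟨p, q, l₀, l₀ + l₁, by omega, by omega, hpq, funext hf⟩
  · rintro ⟨p, q, a, b, hab, hbm, hpq, rfl⟩
    refine ⟨a, b - a, m - b, p, q, by omega, hpq, fun i => ?_⟩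
    simp only [blockTuple, Nat.add_sub_cancel' hab]

lemma isMCoverTuple_blockTuple (hab : a ≤ b) (hbm : b ≤ m) (hpq : p ⋖ q) :
    IsMCoverTuple m (blockTuple m p q a b) :=
  isMCoverTuple_iff_exists_blockTuple.2 ⟨p, q, a, b, hab, hbm, hpq, rfl⟩

lemma blockTuple_ne_bot (hab : a ≤ b) (hbm : b < m) (hq : q ≠ ⊥) :
    blockTuple m p q a b ≠ ⊥ := fun h => by
  simpa [blockTuple_apply_of_le (i := ⟨b, hbm⟩) hab le_rfl, hq] using congrFun h ⟨b, hbm⟩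

lemma IsMCoverTuple.eq_bot_or_blockTuple {f : Fin m → α} (hf : IsMCoverTuple m f) :
    f = ⊥ ∨ (∃ x ≠ ⊥, ∃ a : Fin m, f = blockTuple m x x a a) ∨
      ∃ p q : α, p ≠ ⊥ ∧ p ⋖ q ∧ ∃ a b : Fin m, a < b ∧ f = blockTuple m p q a b := by
  obtain ⟨p, q, a, b, hab, hbm, hpq, rfl⟩ := isMCoverTuple_iff_exists_blockTuple.1 hf
  have hq : q ≠ ⊥ := hpq.lt.ne_bot
  rcases hbm.lt_or_eq with hbm | rfl
  · by_cases h : p = ⊥ ∨ a = b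
    · refine Or.inr (Or.inl ⟨q, hq, ⟨b, hbm⟩, funext fun i => ?_⟩)
      rcases h with rfl | rfl <;> simp only [blockTuple] <;> split_ifs <;> first | rfl | omega
    · rw [not_or] at h
      exact Or.inr (Or.inr ⟨p, q, h.1, hpq, ⟨a, by omega⟩, ⟨b, hbm⟩,
        Fin.mk_lt_mk.2 (lt_of_le_of_ne hab h.2), rfl⟩)
  · by_cases h : p = ⊥ ∨ a = b
    · refine Or.inl (funext fun i => ?_)
      rcases h with rfl | rfl <;> simp only [blockTuple] <;> split_ifs <;> first | rfl | omega
    · rw [not_or] at h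
      refine Or.inr (Or.inl ⟨p, h.1, ⟨a, by omega⟩, funext fun i => ?_⟩)
      simp only [blockTuple]; split_ifs <;> first | rfl | omega

section IsStronglyCoatomic

variable [IsStronglyCoatomic α]

lemma isMCoverTuple_bot [Nontrivial α] : IsMCoverTuple m (⊥ : Fin m → α) := by
  obtain ⟨x, hx⟩ := exists_ne (⊥ : α)
  obtain ⟨t, -, htx⟩ := exists_le_covBy_of_lt hx.bot_lt
  convert isMCoverTuple_blockTuple le_rfl le_rfl htx (m := m) (a := m) using 1
  funext i
  exact (blockTuple_apply_of_lt i.isLt).symm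

lemma isMCoverTuple_blockTuple_self (hx : x ≠ ⊥) (ham : a ≤ m) :
    IsMCoverTuple m (blockTuple m x x a a) := by
  obtain ⟨t, -, htx⟩ := exists_le_covBy_of_lt hx.bot_lt
  convert isMCoverTuple_blockTuple le_rfl ham htx using 1
  funext i
  simp only [blockTuple]; split_ifs <;> rfl

lemma isMCoverTuple_iff_eq_bot_or_blockTuple [Nontrivial α] {f : Fin m → α} :
    IsMCoverTuple m f ↔ f = ⊥ ∨ (∃ x ≠ ⊥, ∃ a : Fin m, f = blockTuple m x x a a) ∨
      ∃ p q : α, p ≠ ⊥ ∧ p ⋖ q ∧ ∃ a b : Fin m, a < b ∧ f = blockTuple m p q a b := by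
  refine ⟨IsMCoverTuple.eq_bot_or_blockTuple, ?_⟩
  rintro (rfl | ⟨x, hx, a, rfl⟩ | ⟨p, q, -, hpq, a, b, hab, rfl⟩)
  · exact isMCoverTuple_bot
  · exact isMCoverTuple_blockTuple_self hx a.isLt.le
  · exact isMCoverTuple_blockTuple hab.le b.isLt.le hpq

end IsStronglyCoatomic

lemma blockTuple_self_injOn :
    Set.InjOn (fun xa : α × Fin m => blockTuple m xa.1 xa.1 xa.2 xa.2) {xa | xa.1 ≠ ⊥} := by
  rintro ⟨x, a⟩ (hx : x ≠ ⊥) ⟨y, b⟩ (hy : y ≠ ⊥)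
    (h : blockTuple m x x a a = blockTuple m y y b b)
  obtain rfl : a = b := eq_of_forall_lt_iff fun i => by
    rw [← Fin.val_fin_lt, ← Fin.val_fin_lt, ← blockTuple_eq_bot_iff hx hx (b := a),
      ← blockTuple_eq_bot_iff hy hy (b := b), h]
  have hxy := congrFun h a
  rw [blockTuple_apply_of_le le_rfl le_rfl, blockTuple_apply_of_le le_rfl le_rfl] at hxy
  rw [hxy]

lemma blockTuple_injOn :
    Set.InjOn (fun x : (α × α) × (Fin m × Fin m) => blockTuple m x.1.1 x.1.2 x.2.1 x.2.2)
      {x | x.1.1 ≠ ⊥ ∧ x.1.1 ⋖ x.1.2 ∧ x.2.1 < x.2.2} := by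
  rintro ⟨⟨p, q⟩, a, b⟩ ⟨hp, hpq, hab⟩ ⟨⟨p', q'⟩, a', b'⟩ ⟨hp', hpq', hab'⟩
    (h : blockTuple m p q a b = blockTuple m p' q' a' b')
  simp only at hp hpq hab hp' hpq' hab'
  obtain rfl : q = q' := by
    have := congrFun h (b ⊔ b')
    rwa [blockTuple_apply_of_le (hab.le.trans le_sup_left) le_sup_left,
      blockTuple_apply_of_le (hab'.le.trans le_sup_right) le_sup_right] at this
  obtain rfl : a = a' := eq_of_forall_lt_iff fun i => by
    rw [← Fin.val_fin_lt, ← Fin.val_fin_lt, ← blockTuple_eq_bot_iff hp hpq.lt.ne_bot (b := b),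
      ← blockTuple_eq_bot_iff hp' hpq.lt.ne_bot (b := b'), h]
  obtain rfl : b = b' := eq_of_forall_ge_iff fun i => by
    rw [← Fin.val_fin_le, ← Fin.val_fin_le, ← blockTuple_eq_right_iff hpq.ne hpq.lt.ne_bot hab.le,
      ← blockTuple_eq_right_iff hpq'.ne hpq.lt.ne_bot hab'.le, h]
  have hpp := congrFun h a
  rw [blockTuple_apply_of_le_of_lt le_rfl hab, blockTuple_apply_of_le_of_lt le_rfl hab] at hpp
  rw [hpp]

end BlockTuple

section Lattice

variable {α : Type*} [PartialOrder α] [OrderBot α] {x y : α}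

lemma IsMCoverTuple.eq_bot_or_eq_or_covBy {f : Fin 2 → α} (hf : IsMCoverTuple 2 f) :
    f 0 = ⊥ ∨ f 0 = f 1 ∨ f 0 ⋖ f 1 := by
  obtain ⟨p, q, a, b, hab, hb, hpq, rfl⟩ := isMCoverTuple_iff_exists_blockTuple.1 hf
  interval_cases b <;> interval_cases a <;> simp [blockTuple, hpq]

lemma isMCoverTuple_pair_of_covBy (h : x ⋖ y) : IsMCoverTuple 2 ![x, y] := by
  convert isMCoverTuple_blockTuple zero_le_one one_le_two h using 1
  funext i; fin_cases i <;> rfl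

lemma isMCoverTuple_pair_self [IsStronglyCoatomic α] (hx : x ≠ ⊥) : IsMCoverTuple 2 ![x, x] := by
  convert isMCoverTuple_blockTuple_self hx zero_le_two using 1
  funext i; fin_cases i <;> rfl

theorem eq_of_covBy_of_covBy_of_isLatticeOrder [IsStronglyCoatomic α]
    (h2 : IsLatticeOrder (MCover α 2)) {p q r : α} (hp : p ≠ ⊥) (hq : p ⋖ q) (hr : p ⋖ r) :
    q = r := by
  by_contra hqr
  obtain ⟨c, hc_ub, hc_le⟩ :=
    h2.1 ⟨![p, q], isMCoverTuple_pair_of_covBy hq⟩ ⟨![p, r], isMCoverTuple_pair_of_covBy hr⟩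
  set x := c.1 0
  set y := c.1 1
  have hqc := hc_ub (Set.mem_insert _ _)
  have hrc := hc_ub (Set.mem_insert_of_mem _ rfl)
  have hpx : p ≤ x := hqc 0
  have hqy : q ≤ y := hqc 1
  have hry : r ≤ y := hrc 1
  have ub : ∀ s t : α, (h : IsMCoverTuple 2 ![s, t]) → p ≤ s → q ≤ t → r ≤ t →
      c ≤ ⟨![s, t], h⟩ := by
    intro s t h hs hqt hrt
    refine hc_le ?_
    rintro z (rfl | rfl) <;> intro i <;> fin_cases i <;> assumption
  replace hqy : q < y := hqy.lt_of_ne fun hqy' =>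
    hqr ((hq.eq_or_eq hr.le (hqy' ▸ hry)).resolve_left hr.lt.ne').symm
  replace hry : r < y := hry.lt_of_ne fun hry' =>
    hqr ((hr.eq_or_eq hq.le (hry' ▸ hqy.le)).resolve_left hq.lt.ne')
  have below : ∀ s, p ≤ s → s < y → ∃ t, s ≤ t ∧ t ⋖ y ∧ x ≤ t := by
    intro s hps hsy
    obtain ⟨t, hst, hty⟩ := exists_le_covBy_of_lt hsy
    exact ⟨t, hst, hty, ub t y (isMCoverTuple_pair_of_covBy hty) (hps.trans hst) hqy.le hry.le 0⟩
  have hxy : x ⋖ y := by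
    obtain ⟨t, -, hty, hxt⟩ := below q hq.le hqy
    rcases c.2.eq_bot_or_eq_or_covBy with hx | hx | hx
    · exact absurd (le_bot_iff.1 (hx ▸ hpx)) hp
    · exact absurd (hx.symm.trans_le hxt) hty.lt.not_ge
    · exact hx
  have le_x : ∀ s, p ≤ s → s < y → s ≤ x := by
    intro s hps hsy
    obtain ⟨t, hst, hty, hxt⟩ := below s hps hsy
    rwa [(hxy.eq_or_eq hxt hty.le).resolve_right hty.ne] at hst
  exact hxy.lt.not_ge <| ub x x (isMCoverTuple_pair_self (ne_bot_of_le_ne_bot hp hpx)) hpx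
    (le_x q hq.le hqy) (le_x r hr.le hry) 1

end Lattice

section Count

variable {α : Type*} [PartialOrder α]

lemma blockTuple_self_ne_blockTuple [OrderBot α] {m a b c : ℕ} {x p q : α} (hp : p ≠ ⊥)
    (hpq : p ⋖ q) (hab : a < b) (hbm : b < m) (hcm : c < m) :
    blockTuple m x x c c ≠ blockTuple m p q a b := by
  intro h
  have hxq : x = q := by
    have := congrFun h ⟨max b c, by omega⟩
    rwa [blockTuple_apply_of_le (le_max_right _ _) (le_max_right _ _),
      blockTuple_apply_of_le (hab.le.trans (le_max_left _ _)) (le_max_left _ _)] at this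
  have hxp := congrFun h ⟨a, by omega⟩
  rw [blockTuple_apply_of_le_of_lt (a := a) (i := ⟨a, by omega⟩) le_rfl hab] at hxp
  unfold blockTuple at hxp
  split_ifs at hxp
  · exact hp hxp.symm
  · exact hpq.lt.ne (hxp.symm.trans hxq)

variable [Fintype α] [BoundedOrder α] [Nontrivial α]

open Classical in
lemma card_filter_covBy_of_ne_bot (hu : ∀ p q r : α, p ≠ ⊥ → p ⋖ q → p ⋖ r → q = r) :
    #{pq : α × α | pq.1 ≠ ⊥ ∧ pq.1 ⋖ pq.2} = Fintype.card α - 2 := by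
  calc #{pq : α × α | pq.1 ≠ ⊥ ∧ pq.1 ⋖ pq.2} = #({⊥, ⊤}ᶜ : Finset α) := by
        refine card_nbij Prod.fst ?_ ?_ ?_
        · rintro ⟨p, q⟩ hpq
          obtain ⟨hp, hpq⟩ : p ≠ ⊥ ∧ p ⋖ q := by simpa using hpq
          simp [hp, hpq.lt.ne_top]
        · rintro ⟨p, q⟩ hpq ⟨p', q'⟩ hpq' (rfl : p = p')
          obtain ⟨hp, hpq⟩ : p ≠ ⊥ ∧ p ⋖ q := by simpa using hpq
          rw [hu p q q' hp hpq (show p ≠ ⊥ ∧ p ⋖ q' by simpa using hpq').2]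
        · intro p hp
          obtain ⟨hpt, hp⟩ : p ≠ ⊤ ∧ p ≠ ⊥ := by simpa [not_or] using hp
          obtain ⟨q, hpq, -⟩ := exists_covBy_le_of_lt hpt.lt_top
          exact ⟨(p, q), by simpa [hp] using hpq, rfl⟩
    _ = Fintype.card α - 2 := by rw [card_compl, card_pair bot_ne_top]

theorem card_mCover_of_covBy_unique (hu : ∀ p q r : α, p ≠ ⊥ → p ⋖ q → p ⋖ r → q = r)
    (m : ℕ) :
    Nat.card (MCover α m) =
      1 + (Fintype.card α - 1) * m + (Fintype.card α - 2) * m.choose 2 := by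
  classical
  set T₁ : Finset (Fin m → α) := (univ.erase ⊥ ×ˢ (univ : Finset (Fin m))).image
    fun xa => blockTuple m xa.1 xa.1 xa.2 xa.2
  set T₂ : Finset (Fin m → α) :=
    (({pq : α × α | pq.1 ≠ ⊥ ∧ pq.1 ⋖ pq.2} : Finset _) ×ˢ
      ({ab : Fin m × Fin m | ab.1 < ab.2} : Finset _)).image
        fun x => blockTuple m x.1.1 x.1.2 x.2.1 x.2.2
  have hS : ({f | IsMCoverTuple m f} : Finset (Fin m → α)) = {⊥} ∪ T₁ ∪ T₂ := by
    ext f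
    simp [T₁, T₂, isMCoverTuple_iff_eq_bot_or_blockTuple, eq_comm, and_assoc]
  have hT₁ : #T₁ = (Fintype.card α - 1) * m := by
    rw [card_image_of_injOn (blockTuple_self_injOn.mono fun _ h => by simpa using h),
      card_product, card_erase_of_mem (mem_univ _), card_univ, card_univ, Fintype.card_fin]
  have hT₂ : #T₂ = (Fintype.card α - 2) * m.choose 2 := by
    rw [card_image_of_injOn (blockTuple_injOn.mono fun _ h => by simpa [and_assoc] using h),
      card_product, card_filter_covBy_of_ne_bot hu, Fintype.card_product_filter_lt,
      Fintype.card_fin]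
  have h₁ : Disjoint {⊥} T₁ := by
    simp only [T₁, disjoint_singleton_left, mem_image, not_exists, not_and]
    rintro ⟨x, a⟩ hx
    exact blockTuple_ne_bot le_rfl a.isLt (by simpa using hx)
  have h₂ : Disjoint ({⊥} ∪ T₁) T₂ := by
    rw [disjoint_union_left, disjoint_singleton_left, disjoint_left]
    simp only [T₁, T₂, mem_image, not_exists, not_and, forall_exists_index, and_imp]
    constructor
    · rintro ⟨⟨p, q⟩, a, b⟩ h
      obtain ⟨⟨-, hpq⟩, hab⟩ : (p ≠ ⊥ ∧ p ⋖ q) ∧ a < b := by simpa using h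
      exact blockTuple_ne_bot hab.le b.isLt hpq.lt.ne_bot
    · rintro _ ⟨x, c⟩ - rfl ⟨⟨p, q⟩, a, b⟩ h
      obtain ⟨⟨hp, hpq⟩, hab⟩ : (p ≠ ⊥ ∧ p ⋖ q) ∧ a < b := by simpa using h
      exact (blockTuple_self_ne_blockTuple hp hpq hab b.isLt c.isLt).symm
  rw [Nat.card_eq_fintype_card, Fintype.card_subtype, hS, card_union_of_disjoint h₂,
    card_union_of_disjoint h₁, card_singleton, hT₁, hT₂]

end Count

theorem stmt_10_general {α : Type*} [Fintype α] [PartialOrder α] [BoundedOrder α]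
    (hn : 1 < Fintype.card α)
    (h : ∀ m : ℕ, 0 < m → IsLatticeOrder (MCover α m))
    (m : ℕ) :
    (Nat.card (MCover α m) : ℤ) =
      (Fintype.card α : ℤ) * (m + 1).choose 2 - (m : ℤ) ^ 2 + 1 := by
  have : Nontrivial α := Fintype.one_lt_card_iff_nontrivial.1 hn
  have hu : ∀ p q r : α, p ≠ ⊥ → p ⋖ q → p ⋖ r → q = r := fun _ _ _ =>
    eq_of_covBy_of_covBy_of_isLatticeOrder (h 2 two_pos)
  have hchoose : (m + 1).choose 2 = m + m.choose 2 := by simp [Nat.choose_succ_succ']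
  have htwo : (m + 1) * m = (m + m.choose 2) * 2 := by
    simpa [hchoose] using Nat.add_one_mul_choose_eq m 1
  zify at htwo
  rw [card_mCover_of_covBy_unique hu, hchoose]
  push_cast [Nat.cast_sub hn.le, Nat.cast_sub hn]
  linear_combination htwo

/-- If `P` has `n > 1` elements and all its m-cover posets are lattices, then
`|P^⟨m⟩| = n·C(m+1,2) − m² + 1`. -/
theorem stmt_10 {α : Type*} [Fintype α] [PartialOrder α] [BoundedOrder α]
    (hn : 1 < Fintype.card α)
    (h : ∀ m : ℕ, 0 < m → IsLatticeOrder (MCover α m))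
    (m : ℕ) (hm : 0 < m) :
    (Nat.card (MCover α m) : ℤ) =
      (Fintype.card α : ℤ) * (m + 1).choose 2 - (m : ℤ) ^ 2 + 1 :=
  stmt_10_general hn h m
end

section
/- Let P be a finite bounded poset such that the m-cover poset P^⟨m⟩ is a trim lattice for every integer m > 0, and fix an integer m > 0. Then for all elements x < y of P^⟨m⟩, the Möbius function μ of P^⟨m⟩ satisfies: μ(x,y) = 1 if the interval [x,y] is nuclear and has exactly two atoms; μ(x,y) = −1 if y covers x; and μ(x,y) = 0 otherwise. -/
/-- An element `x` of a lattice is left-modular if `(y ∨ x) ∧ z = y ∨ (x ∧ z)` whenever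
`y < z` (phrased via least upper bounds and greatest lower bounds). -/
def LeftModularElt {β : Type*} [PartialOrder β] (x : β) : Prop :=
  ∀ y z : β, y < z → ∀ jyx mxz lhs rhs : β,
    IsLUB {y, x} jyx → IsGLB {x, z} mxz →
    IsGLB {jyx, z} lhs → IsLUB {y, mxz} rhs → lhs = rhs

/-- A lattice is left-modular if it has a maximal chain all of whose elements are
left-modular. -/
def IsLeftModularLattice (β : Type*) [PartialOrder β] : Prop :=
  ∃ C : Set β, IsMaxChain (· ≤ ·) C ∧ ∀ x ∈ C, LeftModularElt x

/-- An interval `[x, y]` of a lattice is nuclear if `y` is the join of the atoms of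
`[x, y]` (the elements of the interval covering `x`). -/
def NuclearInterval {β : Type*} [PartialOrder β] (x y : β) : Prop :=
  IsLUB {z : β | x ⋖ z ∧ z ≤ y} y

/-!
In a finite meet-semilattice, `μ x y = 0` unless `[x, y]` is nuclear: if every atom of `[x, y]`
lies below some `c` with `y ≰ c`, the sum over `[x, v]` splits along `Iic c` into the sum over the
nontrivial interval `[x, v ⊓ c]` and terms that vanish by induction, except `μ x v`. Covers have
`μ = -1`, and on a nuclear interval with two atoms `a, b` every element other than `x, a, b, y`
lies above at most one atom, so `μ x y = 1`. The theorem thus reduces to showing that no element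
of `P^⟨m⟩` has three upper covers.

For this we show that the Hasse diagram of `P` has maximum degree two. If `q ≠ 0̂` had upper
covers `u ≠ v`, the join of `(0̂, u)` and `(q, v)` in `P^⟨2⟩` would lie below `(c₁, e)` and
`(c₂, e)` for distinct lower covers `c₁, c₂` of `e = u ∨ v`; as its second entry is `e`, its first
entry would have to be both `c₁` and `c₂`. Extremality of `P^⟨2⟩` bounds the atoms of `P`: the
`2 (|P| - 2)` elements of `P^⟨2⟩` whose first entry lies strictly between `0̂` and `1̂` are
meet-irreducible, while a chain in `P` contains at most one atom, so chains in `P^⟨2⟩` have length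
at most `2 (|P| - #atoms)`. Hence `P` has at most two atoms, and at most one if `1̂` has a unique
lower cover `c ≠ 0̂`, since then `(0̂, 1̂)` is meet-irreducible too. Finally, an upper cover of an
element of `P^⟨m⟩` changes a single entry, and the possible changes are labelled by the Hasse
neighbours of one fixed entry.
-/

open Set

section Mobius

variable {β : Type*}

structure IsMobiusFunction [PartialOrder β] (μ : β → β → ℤ) : Prop where
  apply_self : ∀ x, μ x x = 1
  finsum_Icc : ∀ x y, x < y → ∑ᶠ z ∈ Icc x y, μ x z = 0

lemma finsum_mem_eq_of_subset_of_eq_zero {M : Type*} [AddCommMonoid M] [Finite β] {f : β → M}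
    {s t : Set β} (hts : t ⊆ s) (h : ∀ z ∈ s \ t, f z = 0) : ∑ᶠ z ∈ s, f z = ∑ᶠ z ∈ t, f z := by
  rw [← finsum_mem_add_sdiff hts (toFinite s), finsum_mem_eq_zero_of_forall_eq_zero h, add_zero]

namespace IsMobiusFunction

variable {μ : β → β → ℤ}

lemma apply_eq_neg_one_of_covBy [PartialOrder β] (hμ : IsMobiusFunction μ) {x y : β} (h : x ⋖ y) :
    μ x y = -1 := by
  have hsum := hμ.finsum_Icc x y h.lt
  rw [h.Icc_eq, finsum_mem_pair h.ne, hμ.apply_self] at hsum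
  omega

variable [SemilatticeInf β] [Finite β]

lemma apply_eq_zero_of_atoms_le (hμ : IsMobiusFunction μ) {x y c : β} (hxy : x ≤ y)
    (hxc : x ≤ c) (hc : ∀ a, x ⋖ a → a ≤ y → a ≤ c) (hyc : ¬ y ≤ c) : μ x y = 0 := by
  suffices ∀ v, x ≤ v → v ≤ y → ¬ v ≤ c → μ x v = 0 from this y hxy le_rfl hyc
  intro v
  induction v using WellFoundedLT.induction with
  | ind v ih =>
    intro hxv hvy hvc
    have hxv : x < v := lt_of_le_of_ne hxv (by rintro rfl; exact hvc hxc)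
    obtain ⟨a, hxa, hav⟩ := exists_covBy_le_of_lt hxv
    have hlow : Icc x v ∩ Iic c = Icc x (v ⊓ c) := by
      ext z; simp only [mem_inter_iff, mem_Icc, mem_Iic, le_inf_iff]; tauto
    have hxvc : x < v ⊓ c := hxa.lt.trans_le (le_inf hav (hc a hxa (hav.trans hvy)))
    have hhigh : ∑ᶠ z ∈ Icc x v \ Iic c, μ x z = μ x v := by
      rw [finsum_mem_eq_of_subset_of_eq_zero (t := {v}) (by simp [hxv.le, hvc]),
        finsum_mem_singleton]
      rintro z ⟨⟨⟨hxz, hzv⟩, hzc⟩, hzv'⟩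
      exact ih z (lt_of_le_of_ne hzv hzv') hxz (hzv.trans hvy) hzc
    have hsum := hμ.finsum_Icc x v hxv
    rw [← finsum_mem_inter_add_sdiff (Iic c) (toFinite _), hlow, hμ.finsum_Icc x _ hxvc,
      hhigh, zero_add] at hsum
    exact hsum

lemma apply_eq_zero_of_not_nuclear (hμ : IsMobiusFunction μ) {x y : β} (hxy : x < y)
    (h : ¬ NuclearInterval x y) : μ x y = 0 := by
  have hy : y ∈ upperBounds {z | x ⋖ z ∧ z ≤ y} := fun z hz => hz.2
  obtain ⟨u, hu, hyu⟩ : ∃ u ∈ upperBounds {z | x ⋖ z ∧ z ≤ y}, ¬ y ≤ u := by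
    simpa [NuclearInterval, IsLUB, IsLeast, lowerBounds, hy] using h
  obtain ⟨a, hxa, hay⟩ := exists_covBy_le_of_lt hxy
  refine hμ.apply_eq_zero_of_atoms_le (c := y ⊓ u) hxy.le
    (le_inf hxy.le (hxa.le.trans (hu ⟨hxa, hay⟩))) (fun b hxb hby => le_inf hby (hu ⟨hxb, hby⟩))
    fun h => hyu (h.trans inf_le_right)

lemma apply_eq_one_of_two_atoms (hμ : IsMobiusFunction μ) {x y : β} (hxy : x < y)
    (hnuc : NuclearInterval x y) (htwo : Nat.card {z // x ⋖ z ∧ z ≤ y} = 2) : μ x y = 1 := by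
  obtain ⟨a, b, hab, hA⟩ := ncard_eq_two.mp ((Nat.card_coe_set_eq _).symm.trans htwo)
  have hxa : x ⋖ a ∧ a ≤ y := (hA ▸ mem_insert a {b} : a ∈ {z | x ⋖ z ∧ z ≤ y})
  have hxb : x ⋖ b ∧ b ≤ y := (hA ▸ mem_insert_of_mem a rfl : b ∈ {z | x ⋖ z ∧ z ≤ y})
  have hy : IsLUB {a, b} y := hA ▸ hnuc
  -- if `d ≰ z`, then `c` is the only atom of `[x, z]`
  have hzero : ∀ c d, x ⋖ c → x ⋖ d → {c, d} = ({a, b} : Set β) → ∀ z ∈ Icc x y,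
      ¬ d ≤ z → z ≠ x → z ≠ c → μ x z = 0 := by
    intro c d hxc hxd hcd z hz hdz hzx hzc
    refine hμ.apply_eq_zero_of_atoms_le hz.1 hxc.le (fun e hxe hez => ?_) fun hzc' => ?_
    · have he : e ∈ ({c, d} : Set β) := hcd ▸ hA ▸ ⟨hxe, hez.trans hz.2⟩
      rcases he with rfl | rfl
      · exact le_rfl
      · exact absurd hez hdz
    · rcases hxc.eq_or_eq hz.1 hzc' with rfl | rfl <;> contradiction
  have hay : a ≠ y := by
    rintro rfl
    exact hab ((hxa.1.eq_or_eq hxb.1.le hxb.2).resolve_left hxb.1.ne').symm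
  have hby : b ≠ y := by
    rintro rfl
    exact hab ((hxb.1.eq_or_eq hxa.1.le hxa.2).resolve_left hxa.1.ne')
  have hsum := hμ.finsum_Icc x y hxy
  rw [finsum_mem_eq_of_subset_of_eq_zero (t := {x, a, b, y})] at hsum
  · rw [finsum_mem_insert _ (by simp [hxa.1.ne, hxb.1.ne, hxy.ne]) (toFinite _),
      finsum_mem_insert _ (by simp [hab, hay]) (toFinite _), finsum_mem_pair hby,
      hμ.apply_self, hμ.apply_eq_neg_one_of_covBy hxa.1, hμ.apply_eq_neg_one_of_covBy hxb.1] at hsum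
    omega
  · simp [insert_subset_iff, hxa.1.le, hxa.2, hxb.1.le, hxb.2, hxy.le]
  · rintro z ⟨hz, hz'⟩
    simp only [mem_insert_iff, mem_singleton_iff, not_or] at hz'
    by_cases hbz : b ≤ z
    · refine hzero b a hxb.1 hxa.1 (pair_comm b a) z hz (fun haz => hz'.2.2.2 ?_) hz'.1 hz'.2.2.1
      exact le_antisymm hz.2 (hy.2 (by simp [upperBounds, haz, hbz]))
    · exact hzero a b hxa.1 hxb.1 rfl z hz hbz hz'.1 hz'.2.1

end IsMobiusFunction

end Mobius

lemma NuclearInterval.covBy_of_card_eq_one {β : Type*} [PartialOrder β] {x y : β}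
    (h : NuclearInterval x y) (hone : Nat.card {z // x ⋖ z ∧ z ≤ y} = 1) : x ⋖ y := by
  obtain ⟨a, ha⟩ := ncard_eq_one.mp ((Nat.card_coe_set_eq _).symm.trans hone)
  have hxa : x ⋖ a ∧ a ≤ y := (ha ▸ mem_singleton a : a ∈ {z | x ⋖ z ∧ z ≤ y})
  rw [NuclearInterval, ha] at h
  exact isLUB_singleton.unique h ▸ hxa.1

section FinitePoset

variable {β : Type*} [PartialOrder β]

lemma meetIrred_of_forall_lt_imp_le {x v : β} (hxv : x < v) (h : ∀ z, x < z → v ≤ z) :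
    MeetIrred x := by
  refine ⟨⟨v, hxv⟩, v, ⟨hxv, fun w hxw hwv => (h w hxw).not_gt hwv⟩, fun z hz => ?_⟩
  exact (h z hz.1).lt_or_eq.elim (fun hvz => (hz.2 hxv hvz).elim) Eq.symm

lemma posetLength_le_of_strictMono (W : β → ℕ) (hW : StrictMono W) {lo hi : ℕ}
    (hlo : ∀ z, lo ≤ W z) (hhi : ∀ z, W z ≤ hi) : posetLength β ≤ hi - lo := by
  refine csSup_le' fun n ⟨f, hf, _, _⟩ => ?_
  have := Finset.card_le_card_of_injOn (W ∘ f) (s := Finset.univ) (t := Finset.Icc lo hi)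
    (fun i _ => by simp [hlo, hhi]) (hW.comp hf).injective.injOn
  simp only [Finset.card_univ, Fintype.card_fin, Nat.card_Icc] at this
  omega

lemma isChain_Ici_of_covBy_unique [Finite β] {s : β}
    (h : ∀ q, s ≤ q → ∀ u v, q ⋖ u → q ⋖ v → u = v) : IsChain (· ≤ ·) (Ici s) := by
  induction s using WellFoundedGT.induction with
  | ind s ih =>
    intro u (hsu : s ≤ u) v (hsv : s ≤ v) _
    rcases hsu.eq_or_lt with rfl | hsu
    · exact Or.inl hsv
    rcases hsv.eq_or_lt with rfl | hsv
    · exact Or.inr hsu.le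
    obtain ⟨c, hsc, hcu⟩ := exists_covBy_le_of_lt hsu
    obtain ⟨c', hsc', hcv⟩ := exists_covBy_le_of_lt hsv
    obtain rfl := h s le_rfl c c' hsc hsc'
    exact (ih c hsc.lt fun q hcq => h q (hsc.le.trans hcq)).total hcu hcv

end FinitePoset

namespace MCover

variable {α : Type*} [PartialOrder α] [OrderBot α] {m a b : ℕ} {p q : α}

def steps (a b : ℕ) (p q : α) (i : Fin m) : α :=
  if (i : ℕ) < a then ⊥ else if (i : ℕ) < b then p else q

lemma steps_le {z : Fin m → α} (hp : ∀ i : Fin m, a ≤ i → (i : ℕ) < b → p ≤ z i)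
    (hq : ∀ i : Fin m, a ≤ i → b ≤ i → q ≤ z i) : steps a b p q ≤ z := fun i => by
  simp only [steps]
  split_ifs with h₁ h₂
  exacts [bot_le, hp i (not_lt.mp h₁) h₂, hq i (not_lt.mp h₁) (not_lt.mp h₂)]

lemma isMCoverTuple_steps (hab : a ≤ b) (hbm : b ≤ m) (h : p ⋖ q) :
    IsMCoverTuple m (steps a b p q) :=
  ⟨a, b - a, m - b, p, q, by omega, h, fun i => by rw [Nat.add_sub_cancel' hab]; rfl⟩

lemma exists_eq_steps (x : MCover α m) :
    ∃ a b p q, a ≤ b ∧ b ≤ m ∧ p ⋖ q ∧ x.val = steps a b p q := by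
  obtain ⟨l₀, l₁, l₂, p, q, hl, hpq, hx⟩ := x.2
  exact ⟨l₀, l₀ + l₁, p, q, by omega, by omega, hpq, funext hx⟩

lemma monotone (x : MCover α m) : Monotone x.val := by
  obtain ⟨a, b, p, q, -, -, hpq, hx⟩ := x.exists_eq_steps
  intro i j (hij : (i : ℕ) ≤ j)
  simp only [hx, steps]
  split_ifs <;> first | exact le_rfl | exact bot_le | exact hpq.le | omega

lemma covBy_of_lt (x : MCover α m) {i j : Fin m} (hi : x.val i ≠ ⊥) (hij : x.val i < x.val j) :
    x.val i ⋖ x.val j := by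
  obtain ⟨a, b, p, q, -, -, hpq, hx⟩ := x.exists_eq_steps
  simp only [hx, steps] at hi hij ⊢
  split_ifs at hi hij ⊢ <;> first
    | exact hpq | exact absurd rfl hi | exact absurd hij (lt_irrefl _)
    | exact absurd hij not_lt_bot | exact absurd hij hpq.lt.not_gt

lemma eq_bot_or_eq_steps (x : MCover α m) :
    (∀ i, x.val i = ⊥) ∨ (∃ a s, a < m ∧ s ≠ ⊥ ∧ x.val = steps a a ⊥ s) ∨
      ∃ a b q₁ q₂, a < b ∧ b < m ∧ q₁ ≠ ⊥ ∧ q₁ ⋖ q₂ ∧ x.val = steps a b q₁ q₂ := by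
  obtain ⟨a, b, p, q, hab, hbm, hpq, hx⟩ := x.exists_eq_steps
  rw [hx]
  have hq : q ≠ ⊥ := hpq.lt.ne_bot
  rcases eq_or_ne p ⊥ with rfl | hp
  · rcases hbm.eq_or_lt with rfl | hbm
    · left; intro i; simp [steps, i.is_lt]
    · refine Or.inr (Or.inl ⟨b, q, hbm, hq, funext fun i => ?_⟩)
      simp only [steps]; split_ifs <;> first | rfl | omega
  rcases hbm.eq_or_lt with rfl | hbm
  · rcases hab.eq_or_lt with rfl | ham
    · left; intro i; simp [steps, i.is_lt]
    · refine Or.inr (Or.inl ⟨a, p, ham, hp, funext fun i => ?_⟩)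
      simp only [steps, i.is_lt]; split_ifs <;> rfl
  rcases hab.eq_or_lt with rfl | hab
  · refine Or.inr (Or.inl ⟨a, q, hbm, hq, funext fun i => ?_⟩)
    simp only [steps]; split_ifs <;> rfl
  · exact Or.inr (Or.inr ⟨a, b, p, q, hab, hbm, hp, hpq, rfl⟩)

lemma le_iff_two {x y : MCover α 2} : x ≤ y ↔ x.val 0 ≤ y.val 0 ∧ x.val 1 ≤ y.val 1 :=
  Subtype.coe_le_coe.symm.trans (Pi.le_def.trans Fin.forall_fin_two)

lemma ext_two {x y : MCover α 2} (h₀ : x.val 0 = y.val 0) (h₁ : x.val 1 = y.val 1) : x = y :=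
  Subtype.ext (funext (Fin.forall_fin_two.mpr ⟨h₀, h₁⟩))

lemma val_zero_eq_or_covBy (x : MCover α 2) (h : x.val 0 ≠ ⊥) :
    x.val 0 = x.val 1 ∨ x.val 0 ⋖ x.val 1 :=
  (x.monotone (Fin.zero_le 1)).eq_or_lt.imp id (x.covBy_of_lt h)

lemma val_eq_of_covBy {x z : MCover α m} (hz : x ⋖ z) {w : Fin m → α} (hw : IsMCoverTuple m w)
    (hxw : x.val < w) (hwz : w ≤ z.val) : z.val = w :=
  congrArg Subtype.val ((hz.eq_or_eq (c := ⟨w, hw⟩) hxw.le hwz).resolve_left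
    (fun h => hxw.ne (congrArg Subtype.val h).symm)).symm

lemma exists_succ_eq_and_ne_bot {x z : MCover α m} (hxz : x < z) (ham : a ≤ m)
    (hagree : ∀ i : Fin m, a ≤ i → z.val i = x.val i) :
    ∃ i : Fin m, (i : ℕ) + 1 = a ∧ z.val i ≠ ⊥ := by
  by_contra! h
  refine hxz.ne' (Subtype.ext (funext fun i => ?_))
  by_cases hi : a ≤ i
  · exact hagree i hi
  · have hz : z.val i = ⊥ := le_bot_iff.mp ((z.monotone (show i ≤ ⟨a - 1, by omega⟩ from
      Fin.le_def.mpr (by simp; omega))).trans (h ⟨a - 1, by omega⟩ (by simp; omega)).le)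
    exact hz.trans (le_bot_iff.mp (hz ▸ hxz.le i)).symm

lemma ncard_covBy_le_of_forall_mem {x : MCover α m} (T : Set (Fin m → α))
    (h : ∀ z, x ⋖ z → z.val ∈ T) (hT : T.Finite := by toFinite_tac) : {z | x ⋖ z}.ncard ≤ T.ncard :=
  ncard_le_ncard_of_injOn Subtype.val h Subtype.val_injective.injOn hT

variable [Finite α] [Nontrivial α]

lemma isMCoverTuple_steps_self (ham : a ≤ m) (s : α) :
    IsMCoverTuple m (steps a a ⊥ s) := by
  rcases eq_or_ne s ⊥ with rfl | hs
  · obtain ⟨y, hy⟩ := exists_ne (⊥ : α)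
    obtain ⟨t, ht, -⟩ := exists_covBy_le_of_lt (bot_lt_iff_ne_bot.mpr hy)
    convert isMCoverTuple_steps (m := m) le_rfl le_rfl ht using 1
    funext i
    simp [steps, i.is_lt]
  · obtain ⟨t, -, ht⟩ := exists_le_covBy_of_lt (bot_lt_iff_ne_bot.mpr hs)
    convert isMCoverTuple_steps (m := m) le_rfl ham ht using 1
    funext i
    simp only [steps]
    split_ifs <;> rfl

def const (s : α) : MCover α m := ⟨steps 0 0 ⊥ s, isMCoverTuple_steps_self m.zero_le s⟩

@[simp] lemma const_val (s : α) (i : Fin m) : (const s : MCover α m).val i = s := by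
  simp [const, steps]

lemma const_mono {s t : α} (h : s ≤ t) : (const s : MCover α m) ≤ const t := fun i => by
  simpa using h

lemma exists_isLUB (hm : 0 < m) (hsup : ∀ x y : MCover α m, ∃ z, IsLUB {x, y} z) (u v : α) :
    ∃ e, IsLUB {u, v} e := by
  obtain ⟨L, hL⟩ := hsup (const u) (const v)
  refine ⟨L.val ⟨0, hm⟩, ?_, fun e he => ?_⟩
  · rintro w (rfl | rfl)
    · simpa using hL.1 (mem_insert _ _) ⟨0, hm⟩
    · simpa using hL.1 (mem_insert_of_mem _ rfl) ⟨0, hm⟩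
  · have : L ≤ const e := hL.2 (by
      rintro w (rfl | rfl)
      exacts [const_mono (he (mem_insert _ _)), const_mono (he (mem_insert_of_mem _ rfl))])
    simpa using this ⟨0, hm⟩

end MCover

section CollapsedRank

variable {α : Type*} [PartialOrder α] [OrderBot α] [Finite α]

open Classical in
/-- The number of elements of `Iic s` once all atoms are identified; it is strictly monotone
because a chain contains at most one atom. -/
noncomputable def collapsedRank (s : α) : ℕ :=
  {t | t ≤ s ∧ ¬ IsAtom t}.ncard + if s = ⊥ then 0 else 1

lemma strictMono_collapsedRank : StrictMono (collapsedRank (α := α)) := by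
  intro s s' hss'
  have hsub : {t | t ≤ s ∧ ¬ IsAtom t} ⊆ {t | t ≤ s' ∧ ¬ IsAtom t} :=
    fun t ht => ⟨ht.1.trans hss'.le, ht.2⟩
  have hcard := ncard_le_ncard hsub
  unfold collapsedRank
  rw [if_neg hss'.ne_bot]
  by_cases hs' : IsAtom s'
  · obtain rfl : s = ⊥ := hs'.lt_iff.mp hss'
    rw [if_pos rfl]
    omega
  · have := ncard_lt_ncard (ssubset_of_subset_of_ne hsub fun h =>
      (h ▸ (show s' ∈ {t | t ≤ s' ∧ ¬ IsAtom t} from ⟨le_rfl, hs'⟩)).1.not_gt hss')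
    split_ifs <;> omega

end CollapsedRank

section CoverPosetStructure

open MCover

variable {α : Type*} [PartialOrder α] [BoundedOrder α]

lemma meetIrred_of_val_eq_bot_top {c : α} (hc : c ≠ ⊥) (hct : c ⋖ ⊤)
    (huniq : ∀ d, d ⋖ ⊤ → d = c) (z : MCover α 2) (h₀ : z.val 0 = ⊥) (h₁ : z.val 1 = ⊤) :
    MeetIrred z := by
  refine meetIrred_of_forall_lt_imp_le (v := ⟨steps 0 1 c ⊤,
    isMCoverTuple_steps zero_le_one one_le_two hct⟩) ?_ fun w hzw => ?_
  · refine lt_of_le_of_ne (le_iff_two.mpr (by simp [steps, h₀, h₁])) fun hzv => hc ?_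
    simpa [steps, h₀] using (congrArg (fun w : MCover α 2 => w.val 0) hzv).symm
  · have hw₁ : w.val 1 = ⊤ := top_unique (h₁ ▸ (le_iff_two.mp hzw.le).2)
    have hw₀ : w.val 0 ≠ ⊥ := fun hw₀ => hzw.ne (ext_two (h₀.trans hw₀.symm) (h₁.trans hw₁.symm))
    refine le_iff_two.mpr ⟨?_, by simp [steps, hw₁]⟩
    rcases w.val_zero_eq_or_covBy hw₀ with hw | hw
    · simp [steps, hw, hw₁]
    · simp [steps, huniq _ (hw₁ ▸ hw)]

variable [Finite α] [Nontrivial α]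

lemma collapsedRank_top_sub_bot :
    collapsedRank (⊤ : α) - collapsedRank (⊥ : α) = Nat.card α - {a : α | IsAtom a}.ncard := by
  have hbot : {t : α | t ≤ ⊥ ∧ ¬ IsAtom t} = {⊥} := by
    ext t; simp only [mem_ofPred_eq, le_bot_iff, mem_singleton_iff, and_iff_left_iff_imp]
    rintro rfl; exact fun h => h.1 rfl
  have htop : {t : α | t ≤ ⊤ ∧ ¬ IsAtom t} = {a | IsAtom a}ᶜ := by ext; simp
  have := ncard_add_ncard_compl {a : α | IsAtom a}
  simp only [collapsedRank, hbot, htop, ncard_singleton, if_pos, if_neg top_ne_bot]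
  omega

lemma posetLength_mcover_two_le :
    posetLength (MCover α 2) ≤ 2 * (Nat.card α - {a : α | IsAtom a}.ncard) := by
  let W : MCover α 2 → ℕ := fun z => collapsedRank (z.val 0) + collapsedRank (z.val 1)
  have hW : StrictMono W := by
    intro z z' hzz'
    obtain ⟨hle, i, hi⟩ := Pi.lt_def.mp (Subtype.coe_lt_coe.mpr hzz')
    have h₀ := strictMono_collapsedRank.monotone (hle 0)
    have h₁ := strictMono_collapsedRank.monotone (hle 1)
    have hi := strictMono_collapsedRank hi
    fin_cases i <;> simp only [W] <;> simp at hi <;> omega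
  have := posetLength_le_of_strictMono W hW
    (lo := 2 * collapsedRank ⊥) (hi := 2 * collapsedRank ⊤)
    (fun z => by
      have := strictMono_collapsedRank.monotone (bot_le (a := z.val 0))
      have := strictMono_collapsedRank.monotone (bot_le (a := z.val 1))
      simp only [W]; omega)
    (fun z => by
      have := strictMono_collapsedRank.monotone (le_top (a := z.val 0))
      have := strictMono_collapsedRank.monotone (le_top (a := z.val 1))
      simp only [W]; omega)
  rw [← collapsedRank_top_sub_bot]
  omega

lemma covBy_unique_right_of_mcover (hsup : ∀ x y : MCover α 2, ∃ z, IsLUB {x, y} z)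
    {q u v : α} (hq : q ≠ ⊥) (hu : q ⋖ u) (hv : q ⋖ v) : u = v := by
  by_contra huv
  obtain ⟨e, he⟩ := exists_isLUB two_pos hsup u v
  have hue : u < e := (he.1 (mem_insert _ _)).lt_of_ne fun hue =>
    huv ((hue ▸ he.1 (mem_insert_of_mem _ rfl) : v ≤ u).lt_or_eq.resolve_left (hu.2 hv.lt)).symm
  have hve : v < e := (he.1 (mem_insert_of_mem _ rfl)).lt_of_ne fun hve =>
    huv ((hve ▸ he.1 (mem_insert _ _) : u ≤ v).lt_or_eq.resolve_left (hv.2 hu.lt))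
  obtain ⟨c₁, huc₁, hc₁⟩ := exists_le_covBy_of_lt hue
  obtain ⟨c₂, hvc₂, hc₂⟩ := exists_le_covBy_of_lt hve
  let w₁ : MCover α 2 := ⟨steps 1 1 ⊥ u, isMCoverTuple_steps_self one_le_two u⟩
  let w₂ : MCover α 2 := ⟨steps 0 1 q v, isMCoverTuple_steps zero_le_one one_le_two hv⟩
  obtain ⟨L, hL⟩ := hsup w₁ w₂
  have hLw₁ := le_iff_two.mp (hL.1 (mem_insert _ _))
  have hLw₂ := le_iff_two.mp (hL.1 (mem_insert_of_mem _ rfl))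
  simp [w₁, w₂, steps] at hLw₁ hLw₂
  have hLc : ∀ c, q ≤ c → (hc : c ⋖ e) → L.val 0 ≤ c ∧ L.val 1 ≤ e := fun c hqc hc => by
    let U : MCover α 2 := ⟨steps 0 1 c e, isMCoverTuple_steps zero_le_one one_le_two hc⟩
    have hU : U ∈ upperBounds {w₁, w₂} := by
      rintro w (rfl | rfl) <;>
        exact le_iff_two.mpr (by simp [U, w₁, w₂, steps, hue.le, hve.le, hqc])
    simpa [U, steps] using le_iff_two.mp (hL.2 hU)
  obtain ⟨hL₁, hLe⟩ := hLc c₁ (hu.le.trans huc₁) hc₁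
  obtain ⟨hL₂, -⟩ := hLc c₂ (hv.le.trans hvc₂) hc₂
  have hLe : L.val 1 = e := le_antisymm hLe (he.2 (by rintro w (rfl | rfl) <;> simp_all))
  rcases L.val_zero_eq_or_covBy (ne_bot_of_le_ne_bot hq hLw₂.1) with h | h
  · exact hc₁.lt.not_ge (hLe ▸ h ▸ hL₁)
  · rw [hLe] at h
    have h₁ := (h.eq_or_eq hL₁ hc₁.le).resolve_right hc₁.ne
    have h₂ := (h.eq_or_eq hL₂ hc₂.le).resolve_right hc₂.ne
    refine hc₁.lt.not_ge (he.2 ?_)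
    rintro w (rfl | rfl)
    exacts [huc₁, h₁ ▸ h₂ ▸ hvc₂]

lemma meetIrred_of_val_zero_ne_bot_ne_top (hsup : ∀ x y : MCover α 2, ∃ z, IsLUB {x, y} z)
    (z : MCover α 2) (hbot : z.val 0 ≠ ⊥) (htop : z.val 0 ≠ ⊤) : MeetIrred z := by
  have huniq : ∀ {u v}, z.val 0 ⋖ u → z.val 0 ⋖ v → u = v :=
    covBy_unique_right_of_mcover hsup hbot
  obtain ⟨u, hu, -⟩ := exists_covBy_le_of_lt (lt_top_iff_ne_top.mpr htop)
  have hup : ∀ t, z.val 0 < t → u ≤ t := fun t ht => by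
    obtain ⟨c, hc, hct⟩ := exists_covBy_le_of_lt ht
    exact huniq hu hc ▸ hct
  rcases z.val_zero_eq_or_covBy hbot with h | h
  · refine meetIrred_of_forall_lt_imp_le (v := ⟨steps 0 1 (z.val 0) u,
      isMCoverTuple_steps zero_le_one one_le_two hu⟩) ?_ fun w hzw => ?_
    · refine lt_of_le_of_ne (le_iff_two.mpr (by simp [steps, ← h, hu.le])) fun hzv => hu.ne ?_
      simpa [steps, ← h] using congrArg (fun w : MCover α 2 => w.val 1) hzv
    · obtain ⟨h₀, h₁⟩ := le_iff_two.mp hzw.le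
      have hw₁ : z.val 0 < w.val 1 := (h ▸ h₁).lt_of_ne fun h₁' => hzw.ne (ext_two
        (le_antisymm h₀ (h₁'.symm ▸ w.monotone (Fin.zero_le 1))) (h ▸ h₁'))
      exact le_iff_two.mpr (by simp [steps, h₀, hup _ hw₁])
  · refine meetIrred_of_forall_lt_imp_le (v := const (z.val 1)) ?_ fun w hzw => ?_
    · refine lt_of_le_of_ne (le_iff_two.mpr (by simp [h.le])) fun hzv => h.ne ?_
      simpa using congrArg (fun w : MCover α 2 => w.val 0) hzv
    · obtain ⟨h₀, h₁⟩ := le_iff_two.mp hzw.le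
      have hw₀ : z.val 0 < w.val 0 := h₀.lt_of_ne fun h₀' => hzw.ne (ext_two h₀' (by
        rcases w.val_zero_eq_or_covBy (h₀' ▸ hbot) with hw | hw
        · exact absurd (h₀' ▸ hw ▸ h₁) h.lt.not_ge
        · exact huniq h (h₀' ▸ hw)))
      rw [huniq h hu]
      exact le_iff_two.mpr (by simp [hup _ hw₀, (huniq h hu) ▸ h₁])

lemma two_mul_ncard_interior_add_ncard_le (hsup : ∀ x y : MCover α 2, ∃ z, IsLUB {x, y} z) :
    2 * {s : α | s ≠ ⊥ ∧ s ≠ ⊤}.ncard +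
      {z : MCover α 2 | MeetIrred z ∧ (z.val 0 = ⊥ ∨ z.val 0 = ⊤)}.ncard ≤
      {z : MCover α 2 | MeetIrred z}.ncard := by
  set I := {s : α | s ≠ ⊥ ∧ s ≠ ⊤}
  set A := {z : MCover α 2 | z.val 0 ∈ I ∧ z.val 0 = z.val 1}
  set B := {z : MCover α 2 | z.val 0 ∈ I ∧ z.val 0 ≠ z.val 1}
  set E := {z : MCover α 2 | MeetIrred z ∧ (z.val 0 = ⊥ ∨ z.val 0 = ⊤)}
  have hA : I.ncard ≤ A.ncard :=
    (ncard_le_ncard (t := (fun z => z.val 0) '' A) fun s (hs : s ∈ I) =>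
      ⟨const s, by simpa [A] using hs, by simp⟩).trans ncard_image_le
  have hB : I.ncard ≤ B.ncard := by
    refine (ncard_le_ncard fun s (hs : s ∈ I) => ?_).trans (ncard_image_le (f := fun z => z.val 0))
    obtain ⟨u, hu, -⟩ := exists_covBy_le_of_lt (lt_top_iff_ne_top.mpr hs.2)
    exact ⟨⟨steps 0 1 s u, isMCoverTuple_steps zero_le_one one_le_two hu⟩,
      by simpa [B, steps, hu.ne] using hs, by simp [steps]⟩
  have hMI : A ∪ B ∪ E ⊆ {z | MeetIrred z} := by
    rintro z ((⟨hz, -⟩ | ⟨hz, -⟩) | ⟨hz, -⟩)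
    exacts [meetIrred_of_val_zero_ne_bot_ne_top hsup z hz.1 hz.2,
      meetIrred_of_val_zero_ne_bot_ne_top hsup z hz.1 hz.2, hz]
  have hAB : Disjoint A B := disjoint_left.mpr fun z hA hB => hB.2 hA.2
  have hABE : Disjoint (A ∪ B) E := disjoint_left.mpr fun z hz hE => by
    rcases hz with hz | hz <;> rcases hE.2 with h | h
    exacts [hz.1.1 h, hz.1.2 h, hz.1.1 h, hz.1.2 h]
  have := ncard_le_ncard hMI
  rw [ncard_union_eq hABE, ncard_union_eq hAB] at this
  omega

lemma two_mul_ncard_atoms_add_ncard_le (hsup : ∀ x y : MCover α 2, ∃ z, IsLUB {x, y} z)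
    (hext : Extremal (MCover α 2)) :
    2 * {a : α | IsAtom a}.ncard +
      {z : MCover α 2 | MeetIrred z ∧ (z.val 0 = ⊥ ∨ z.val 0 = ⊤)}.ncard ≤ 4 := by
  have hI : {s : α | s ≠ ⊥ ∧ s ≠ ⊤}.ncard + 2 = Nat.card α := by
    have : {s : α | s ≠ ⊥ ∧ s ≠ ⊤}ᶜ = {⊥, ⊤} := by ext; simp [or_iff_not_imp_left]
    rw [← ncard_add_ncard_compl {s : α | s ≠ ⊥ ∧ s ≠ ⊤}, this, ncard_pair bot_ne_top]
  have hMI := two_mul_ncard_interior_add_ncard_le hsup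
  have hlen : {z : MCover α 2 | MeetIrred z}.ncard = posetLength (MCover α 2) :=
    (Nat.card_coe_set_eq _).symm.trans hext.2
  have := posetLength_mcover_two_le (α := α)
  have := ncard_le_card {a : α | IsAtom a}
  omega

lemma ncard_atoms_le_two (hsup : ∀ x y : MCover α 2, ∃ z, IsLUB {x, y} z)
    (hext : Extremal (MCover α 2)) : {a : α | IsAtom a}.ncard ≤ 2 := by
  have := two_mul_ncard_atoms_add_ncard_le hsup hext
  omega

lemma ncard_atoms_le_one_of_forall_covBy_top_eq (hsup : ∀ x y : MCover α 2, ∃ z, IsLUB {x, y} z)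
    (hext : Extremal (MCover α 2)) {c : α} (hc : c ≠ ⊥) (hct : c ⋖ ⊤)
    (huniq : ∀ d, d ⋖ ⊤ → d = c) : {a : α | IsAtom a}.ncard ≤ 1 := by
  let z : MCover α 2 := ⟨steps 1 1 ⊥ ⊤, isMCoverTuple_steps_self one_le_two ⊤⟩
  have hz : z ∈ {z : MCover α 2 | MeetIrred z ∧ (z.val 0 = ⊥ ∨ z.val 0 = ⊤)} :=
    ⟨meetIrred_of_val_eq_bot_top hc hct huniq z (by simp [z, steps]) (by simp [z, steps]),
      Or.inl (by simp [z, steps])⟩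
  have := (ncard_pos (toFinite _)).mpr ⟨z, hz⟩
  have := two_mul_ncard_atoms_add_ncard_le hsup hext
  omega

lemma isChain_Ici_of_mcover (hsup : ∀ x y : MCover α 2, ∃ z, IsLUB {x, y} z) {a : α}
    (ha : a ≠ ⊥) : IsChain (· ≤ ·) (Ici a) :=
  isChain_Ici_of_covBy_unique fun _ haq _ _ =>
    covBy_unique_right_of_mcover hsup (ne_bot_of_le_ne_bot ha haq)

lemma eq_of_covBy_of_le_of_le (hsup : ∀ x y : MCover α 2, ∃ z, IsLUB {x, y} z) {a s t₁ t₂ : α}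
    (ha : a ≠ ⊥) (h₁ : a ≤ t₁) (h₂ : a ≤ t₂) (ht₁ : t₁ ⋖ s) (ht₂ : t₂ ⋖ s) : t₁ = t₂ := by
  rcases (isChain_Ici_of_mcover hsup ha).total h₁ h₂ with h | h
  · exact h.eq_of_not_lt fun h' => ht₁.2 h' ht₂.lt
  · exact (h.eq_of_not_lt fun h' => ht₂.2 h' ht₁.lt).symm

lemma ncard_covBy_le_of_not_isAtom (hsup : ∀ x y : MCover α 2, ∃ z, IsLUB {x, y} z)
    (hext : Extremal (MCover α 2)) {s : α} (hs : ¬ IsAtom s) :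
    {t | t ⋖ s}.ncard ≤ 2 ∧ (s ≠ ⊤ → {t | t ⋖ s}.ncard ≤ 1) := by
  have hne : ∀ t, t ⋖ s → t ≠ ⊥ := fun t ht h => hs (bot_covBy_iff.mp (h ▸ ht))
  choose! f hf using fun t (ht : t ⋖ s) => (eq_bot_or_exists_atom_le t).resolve_left (hne t ht)
  have hinj : InjOn f {t | t ⋖ s} := fun t₁ h₁ t₂ h₂ h =>
    eq_of_covBy_of_le_of_le hsup (hf t₁ h₁).1.1 (hf t₁ h₁).2 (h ▸ (hf t₂ h₂).2) h₁ h₂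
  have hle := ncard_le_ncard_of_injOn (t := {a | IsAtom a}) f (fun t ht => (hf t ht).1) hinj
  have hatoms := ncard_atoms_le_two hsup hext
  refine ⟨hle.trans hatoms, fun hst => ?_⟩
  by_contra! h2
  obtain ⟨t₁, t₂, ht₁, ht₂, ht⟩ := (one_lt_ncard_iff (toFinite _)).mp h2
  have hf₁₂ : f t₁ ≠ f t₂ := fun h => ht (hinj ht₁ ht₂ h)
  have hatom_le : ∀ a, IsAtom a → a ≤ s := fun a ha => by
    by_cases h₁ : a = f t₁
    · exact h₁ ▸ (hf t₁ ht₁).2.trans ht₁.le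
    by_cases h₂ : a = f t₂
    · exact h₂ ▸ (hf t₂ ht₂).2.trans ht₂.le
    exact absurd ((two_lt_ncard_iff).mpr ⟨a, _, _, ha, (hf t₁ ht₁).1, (hf t₂ ht₂).1, h₁, h₂, hf₁₂⟩)
      hatoms.not_gt
  obtain ⟨c, hsc, hc⟩ := exists_le_covBy_of_lt (lt_top_iff_ne_top.mpr hst)
  have hbot_lt_s : ⊥ < s := (bot_lt_iff_ne_bot.mpr (hne t₁ ht₁)).trans ht₁.lt
  have hcoatom : ∀ d, d ⋖ ⊤ → d = c := fun d hd => by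
    have hd₀ : d ≠ ⊥ := fun h => (h ▸ hd).2 hbot_lt_s (lt_top_iff_ne_top.mpr hst)
    obtain ⟨a, ha, had⟩ := (eq_bot_or_exists_atom_le d).resolve_left hd₀
    exact eq_of_covBy_of_le_of_le hsup ha.1 had ((hatom_le a ha).trans hsc) hd hc
  have := ncard_atoms_le_one_of_forall_covBy_top_eq hsup hext
    (hbot_lt_s.trans_le hsc).ne' hc hcoatom
  exact hf₁₂ ((ncard_le_one (toFinite _)).mp this _ (hf t₁ ht₁).1 _ (hf t₂ ht₂).1)

lemma ncard_neighborSet_hasse_le_two (hsup : ∀ x y : MCover α 2, ∃ z, IsLUB {x, y} z)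
    (hext : Extremal (MCover α 2)) (s : α) :
    ((SimpleGraph.hasse α).neighborSet s).ncard ≤ 2 := by
  have hN : (SimpleGraph.hasse α).neighborSet s = {t | s ⋖ t} ∪ {t | t ⋖ s} := by ext; simp
  have hU : s ≠ ⊥ → {t | s ⋖ t}.ncard ≤ 1 := fun hs => (ncard_le_one (toFinite _)).mpr
    fun u hu v hv => covBy_unique_right_of_mcover hsup hs hu hv
  rw [hN]
  refine (ncard_union_le _ _).trans ?_
  rcases eq_or_ne s ⊥ with rfl | hs
  · simpa [bot_covBy_iff] using ncard_atoms_le_two hsup hext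
  by_cases hsa : IsAtom s
  · have hL : {t | t ⋖ s} = {⊥} := by
      ext t
      exact ⟨fun ht => hsa.lt_iff.mp ht.lt, fun ht => ht ▸ bot_covBy_iff.mpr hsa⟩
    rw [hL, ncard_singleton]
    exact Nat.add_le_add_right (hU hs) 1
  obtain ⟨h₂, h₁⟩ := ncard_covBy_le_of_not_isAtom hsup hext hsa
  rcases eq_or_ne s ⊤ with rfl | hst
  · simpa using h₂
  · exact (Nat.add_le_add (hU hs) (h₁ hst)).trans le_rfl

end CoverPosetStructure

section MCoverCovers

open MCover

variable {α : Type*} [PartialOrder α] [OrderBot α] {m : ℕ} {x z : MCover α m} {a b : ℕ}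
  {q₁ q₂ : α}

lemma MCover.val_eq_steps_of_covBy_of_eq (huniq : ∀ u, q₁ ⋖ u → u = q₂) (hq₁ : q₁ ≠ ⊥)
    (hq : q₁ ⋖ q₂) (hab : a < b) (hbm : b < m) (hx : x.val = steps a b q₁ q₂) (hz : x ⋖ z)
    (hzb : z.val ⟨b - 1, by omega⟩ = q₁) : z.val = steps (a - 1) b q₁ q₂ := by
  have hx₁ : ∀ i : Fin m, a ≤ i → (i : ℕ) < b → x.val i = q₁ := fun i h₁ h₂ => by
    simp [hx, steps, h₁.not_gt, h₂]
  have hx₂ : ∀ i : Fin m, b ≤ i → x.val i = q₂ := fun i hi => by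
    simp [hx, steps, hi.not_gt, (hab.le.trans hi).not_gt]
  have hz₂ : ∀ i : Fin m, b ≤ i → z.val i = q₂ := fun i hi => huniq _ (hzb ▸ z.covBy_of_lt
    (hzb ▸ hq₁) (hzb ▸ hq.lt.trans_le (hx₂ i hi ▸ hz.lt.le i)))
  have hz₁ : ∀ i : Fin m, a ≤ i → (i : ℕ) < b → z.val i = q₁ := fun i h₁ h₂ =>
    le_antisymm (hzb ▸ z.monotone (show i ≤ ⟨b - 1, by omega⟩ from Fin.le_def.mpr (by simp; omega)))
      (hx₁ i h₁ h₂ ▸ hz.lt.le i)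
  obtain ⟨j, hja, hzj⟩ := exists_succ_eq_and_ne_bot (a := a) hz.lt (by omega) fun i hi => by
    rcases lt_or_ge (i : ℕ) b with h | h
    · rw [hz₁ i hi h, hx₁ i hi h]
    · rw [hz₂ i h, hx₂ i h]
  have hzjq₁ : z.val j ≤ q₁ := hz₁ ⟨a, by omega⟩ le_rfl hab ▸
    z.monotone (Fin.le_def.mpr (by simp; omega))
  have hzjq₂ : z.val j ⋖ q₂ := hz₂ ⟨b, hbm⟩ le_rfl ▸
    z.covBy_of_lt hzj (hz₂ ⟨b, hbm⟩ le_rfl ▸ hzjq₁.trans_lt hq.lt)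
  have hzj₁ : z.val j = q₁ := ((hzjq₂.eq_or_eq hzjq₁ hq.le).resolve_right hq.ne).symm
  have hxj : x.val j = ⊥ := by simp [hx, steps, show (j : ℕ) < a by omega]
  refine val_eq_of_covBy hz (isMCoverTuple_steps (by omega) hbm.le hq) ?_ ?_
  · refine lt_of_le_of_ne (fun i => ?_) fun h => hq₁ ?_
    · simp only [hx, steps]
      split_ifs <;> first | exact le_rfl | exact bot_le | exact hq.le | omega
    · simpa [hxj, steps, show ¬ (j : ℕ) < a - 1 by omega, show (j : ℕ) < b by omega]
        using (congrFun h j).symm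
  · refine steps_le (fun i h₁ h₂ => ?_) fun i _ hi => (hz₂ i hi).ge
    rcases eq_or_ne (i : ℕ) j with h | h
    · rw [Fin.ext h, hzj₁]
    · exact (hz₁ i (by omega) h₂).ge

variable [Finite α]

lemma covBy_unique_right_of_ncard_neighborSet_le_two
    (hdeg : ∀ s : α, ((SimpleGraph.hasse α).neighborSet s).ncard ≤ 2) {q u v : α} (hq : q ≠ ⊥)
    (hu : q ⋖ u) (hv : q ⋖ v) : u = v := by
  by_contra huv
  obtain ⟨t, -, ht⟩ := exists_le_covBy_of_lt (bot_lt_iff_ne_bot.mpr hq)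
  exact (hdeg q).not_gt ((two_lt_ncard_iff (toFinite _)).mpr ⟨t, u, v, Or.inr ht, Or.inl hu,
    Or.inl hv, (ht.lt.trans hu.lt).ne, (ht.lt.trans hv.lt).ne, huv⟩)

lemma MCover.val_eq_steps_of_covBy_of_ne (huniq : ∀ u, q₁ ⋖ u → u = q₂) (hq : q₁ ⋖ q₂)
    (hab : a < b) (hbm : b < m) (hx : x.val = steps a b q₁ q₂) (hz : x ⋖ z)
    (hzb : z.val ⟨b - 1, by omega⟩ ≠ q₁) : z.val = steps a (b - 1) q₁ q₂ := by
  let jb : Fin m := ⟨b - 1, by omega⟩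
  have hxjb : x.val jb = q₁ := by
    simp [hx, steps, jb, show ¬ b - 1 < a by omega, show b - 1 < b by omega]
  obtain ⟨u, hu, huz⟩ := exists_covBy_le_of_lt ((hxjb ▸ hz.lt.le jb).lt_of_ne' hzb)
  have hq₂ : q₂ ≤ z.val jb := huniq u hu ▸ huz
  refine val_eq_of_covBy hz (isMCoverTuple_steps (by omega) (by omega) hq) ?_ ?_
  · refine lt_of_le_of_ne (fun i => ?_) fun h => hq.ne ?_
    · simp only [hx, steps]
      split_ifs <;> first | exact le_rfl | exact bot_le | exact hq.le | omega
    · simpa [hxjb, steps, jb, show ¬ b - 1 < a by omega] using congrFun h jb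
  · refine steps_le (fun i h₁ h₂ => ?_) fun i _ hi =>
      hq₂.trans (z.monotone (Fin.le_def.mpr (by simp [jb]; omega)))
    exact (by simp [hx, steps, h₁.not_gt, show (i : ℕ) < b by omega] : x.val i = q₁) ▸
      hz.lt.le i

lemma MCover.val_mem_of_covBy_of_eq_steps (huniq : ∀ u, q₁ ⋖ u → u = q₂) (hq₁ : q₁ ≠ ⊥)
    (hq : q₁ ⋖ q₂) (hab : a < b) (hbm : b < m) (hx : x.val = steps a b q₁ q₂) (hz : x ⋖ z) :
    z.val ∈ ({steps a (b - 1) q₁ q₂, steps (a - 1) b q₁ q₂} : Set (Fin m → α)) := by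
  by_cases hzb : z.val ⟨b - 1, by omega⟩ = q₁
  · exact Or.inr (val_eq_steps_of_covBy_of_eq huniq hq₁ hq hab hbm hx hz hzb)
  · exact Or.inl (val_eq_steps_of_covBy_of_ne huniq hq hab hbm hx hz hzb)

lemma MCover.val_eq_steps_of_covBy_of_last_ne {s : α} (ham : a < m) (hx : x.val = steps a a ⊥ s)
    (hz : x ⋖ z) (hzl : z.val ⟨m - 1, by omega⟩ ≠ s) :
    ∃ u, s ⋖ u ∧ z.val = steps a (m - 1) s u := by
  let last : Fin m := ⟨m - 1, by omega⟩
  have hxl : x.val last = s := by simp [hx, steps, last, show ¬ m - 1 < a by omega]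
  obtain ⟨u, hu, huz⟩ := exists_covBy_le_of_lt ((hxl ▸ hz.lt.le last).lt_of_ne' hzl)
  refine ⟨u, hu, val_eq_of_covBy hz (isMCoverTuple_steps (by omega) (m.sub_le 1) hu) ?_ ?_⟩
  · refine lt_of_le_of_ne (fun i => ?_) fun h => hu.ne ?_
    · simp only [hx, steps]
      split_ifs <;> first | exact le_rfl | exact bot_le | exact hu.le
    · simpa [hx, steps, last, show ¬ m - 1 < a by omega] using congrFun h last
  · refine steps_le (fun i hi _ => ?_) fun i _ hi => ?_
    · exact (by simp [hx, steps, hi.not_gt] : x.val i = s) ▸ hz.lt.le i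
    · rwa [show i = last from Fin.ext (by simp [last]; omega)]

variable [Nontrivial α]

lemma MCover.val_mem_of_covBy_of_eq_bot (hx : ∀ i, x.val i = ⊥) (hz : x ⋖ z) :
    z.val ∈ (steps (m - 1) (m - 1) ⊥ ·) '' (SimpleGraph.hasse α).neighborSet ⊥ := by
  obtain ⟨-, i, -⟩ := Pi.lt_def.mp (Subtype.coe_lt_coe.mpr hz.lt)
  let last : Fin m := ⟨m - 1, by have := i.is_lt; omega⟩
  have hle : ∀ j : Fin m, j ≤ last := fun j => Fin.le_def.mpr (by simp [last]; omega)
  have hlast : z.val last ≠ ⊥ := fun h => hz.lt.ne' (Subtype.ext (funext fun j =>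
    (le_bot_iff.mp (h ▸ z.monotone (hle j))).trans (hx j).symm))
  obtain ⟨t, ht, htz⟩ := exists_covBy_le_of_lt (bot_lt_iff_ne_bot.mpr hlast)
  refine ⟨t, Or.inl ht, (val_eq_of_covBy hz (isMCoverTuple_steps_self (m.sub_le 1) t) ?_ ?_).symm⟩
  · refine lt_of_le_of_ne (fun j => by simp [hx]) fun h => ht.ne ?_
    simpa [hx, steps, last] using congrFun h last
  · refine steps_le (fun j h₁ h₂ => by omega) fun j _ hj => ?_
    rwa [show j = last from le_antisymm (hle j) (Fin.le_def.mpr hj)]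

lemma MCover.val_eq_steps_of_covBy_of_last_eq {s : α} (hs : s ≠ ⊥) (ham : a < m)
    (hx : x.val = steps a a ⊥ s) (hz : x ⋖ z) (hzl : z.val ⟨m - 1, by omega⟩ = s) :
    (⊥ ⋖ s ∧ z.val = steps (a - 1) (a - 1) ⊥ s) ∨
      ∃ t, t ⋖ s ∧ t ≠ ⊥ ∧ z.val = steps (a - 1) a t s := by
  have hxi : ∀ i : Fin m, a ≤ i → x.val i = s := fun i hi => by simp [hx, steps, hi.not_gt]
  have hagree : ∀ i : Fin m, a ≤ i → z.val i = x.val i := fun i hi =>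
    (le_antisymm (hzl ▸ z.monotone (Fin.le_def.mpr (by simp; omega)))
      (hxi i hi ▸ hz.lt.le i)).trans (hxi i hi).symm
  obtain ⟨j, hja, hzj⟩ := exists_succ_eq_and_ne_bot hz.lt ham.le hagree
  have hza : z.val ⟨a, ham⟩ = s := (hagree _ le_rfl).trans (hxi _ le_rfl)
  have hzjs : z.val j ≤ s := hza ▸ z.monotone (Fin.le_def.mpr (by simp; omega))
  have hxj : x.val j = ⊥ := by simp [hx, steps, show (j : ℕ) < a by omega]
  have hxlt : ∀ t, t ≠ ⊥ → t ≤ s → x.val < steps (a - 1) a t s := fun t ht hts => by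
    refine lt_of_le_of_ne (fun i => ?_) fun h => ht ?_
    · simp only [hx, steps]
      split_ifs <;> first | exact le_rfl | exact bot_le | exact hts | omega
    · simpa [hxj, steps, show ¬ (j : ℕ) < a - 1 by omega, show (j : ℕ) < a by omega]
        using (congrFun h j).symm
  have hlez : ∀ t, t ≤ z.val j → steps (a - 1) a t s ≤ z.val := fun t htj => steps_le
    (fun i h₁ h₂ => by rwa [show i = j from Fin.ext (by omega)])
    fun i _ hi => hxi i hi ▸ hz.lt.le i
  by_cases hjs : z.val j = s
  · refine Or.inl ⟨?_, ?_⟩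
    · obtain ⟨t, -, ht⟩ := exists_le_covBy_of_lt (bot_lt_iff_ne_bot.mpr hs)
      refine (eq_or_ne t ⊥).elim (fun h => h ▸ ht) fun htb => (hz.2 (c := ⟨steps (a - 1) a t s,
        isMCoverTuple_steps (by omega) ham.le ht⟩) (hxlt t htb ht.le) ?_).elim
      refine lt_of_le_of_ne (hlez t (hjs ▸ ht.le)) fun h => ht.ne ?_
      simpa [steps, hjs, show ¬ (j : ℕ) < a - 1 by omega, show (j : ℕ) < a by omega]
        using congrFun (congrArg Subtype.val h) j
    · have hsteps : (steps (a - 1) (a - 1) ⊥ s : Fin m → α) = steps (a - 1) a s s := by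
        funext i; simp only [steps]; split_ifs <;> rfl
      rw [hsteps]
      exact val_eq_of_covBy hz (hsteps ▸ isMCoverTuple_steps_self (by omega) s)
        (hxlt s hs le_rfl) (hlez s hjs.ge)
  · have ht : z.val j ⋖ s := hza ▸ z.covBy_of_lt hzj (hza ▸ lt_of_le_of_ne hzjs hjs)
    exact Or.inr ⟨z.val j, ht, hzj, val_eq_of_covBy hz
      (isMCoverTuple_steps (by omega) ham.le ht) (hxlt _ hzj ht.le) (hlez _ le_rfl)⟩

/-- An upper cover of `(⊥^a, s^(m-a))` raises the last entry to an upper cover `v` of `s`, or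
raises entry `a - 1` to a lower cover `v ≠ ⊥` of `s`, or to `s` itself; the latter happens only
when `s` is an atom, and is then labelled by the lower cover `v = ⊥`. -/
lemma MCover.val_mem_of_covBy_of_eq_steps_self [DecidableEq α] [DecidableLT α] {s : α} (hs : s ≠ ⊥)
    (ham : a < m) (hx : x.val = steps a a ⊥ s) (hz : x ⋖ z) :
    z.val ∈ (fun v => if s < v then steps a (m - 1) s v
      else if v = ⊥ then steps (a - 1) (a - 1) ⊥ s else steps (a - 1) a v s) ''
        (SimpleGraph.hasse α).neighborSet s := by
  by_cases hzl : z.val ⟨m - 1, by omega⟩ = s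
  · rcases val_eq_steps_of_covBy_of_last_eq hs ham hx hz hzl with ⟨hbs, h⟩ | ⟨t, ht, htb, h⟩
    · exact ⟨⊥, Or.inr hbs, by simp [h]⟩
    · exact ⟨t, Or.inr ht, by simp [h, ht.lt.not_gt, htb]⟩
  · obtain ⟨u, hu, h⟩ := val_eq_steps_of_covBy_of_last_ne ham hx hz hzl
    exact ⟨u, Or.inl hu, by simp [h, hu.lt]⟩

lemma MCover.ncard_covBy_le_two (hdeg : ∀ s : α, ((SimpleGraph.hasse α).neighborSet s).ncard ≤ 2)
    (x : MCover α m) : {z | x ⋖ z}.ncard ≤ 2 := by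
  classical
  rcases x.eq_bot_or_eq_steps with hx | ⟨a, s, ham, hs, hx⟩ | ⟨a, b, q₁, q₂, hab, hbm, hq₁, hq, hx⟩
  · exact (ncard_covBy_le_of_forall_mem _ fun z hz => val_mem_of_covBy_of_eq_bot hx hz).trans
      ((ncard_image_le (toFinite _)).trans (hdeg ⊥))
  · exact (ncard_covBy_le_of_forall_mem _ fun z hz =>
      val_mem_of_covBy_of_eq_steps_self hs ham hx hz).trans
      ((ncard_image_le (toFinite _)).trans (hdeg s))
  · have huniq : ∀ u, q₁ ⋖ u → u = q₂ := fun u hu =>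
      covBy_unique_right_of_ncard_neighborSet_le_two hdeg hq₁ hu hq
    exact (ncard_covBy_le_of_forall_mem _ fun z hz =>
      val_mem_of_covBy_of_eq_steps huniq hq₁ hq hab hbm hx hz).trans
      ((ncard_insert_le _ _).trans (by simp))

end MCoverCovers

/-- If all the m-cover posets of `P` are trim lattices, then the Möbius function of
`P^⟨m⟩` takes value `1` on nuclear intervals with two atoms, `−1` on cover relations,
and `0` otherwise. -/
theorem stmt_13 {α : Type*} [Fintype α] [PartialOrder α] [BoundedOrder α]
    (htrim : ∀ m : ℕ, 0 < m →
      IsLatticeOrder (MCover α m) ∧ Extremal (MCover α m) ∧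
        IsLeftModularLattice (MCover α m))
    (m : ℕ) (hm : 0 < m)
    (μ : MCover α m → MCover α m → ℤ)
    (hμ_refl : ∀ x, μ x x = 1)
    (hμ_sum : ∀ x y : MCover α m, x < y →
      (∑ᶠ z ∈ {z : MCover α m | x ≤ z ∧ z ≤ y}, μ x z) = 0) :
    ∀ x y : MCover α m, x < y →
      ((NuclearInterval x y ∧ Nat.card {z : MCover α m // x ⋖ z ∧ z ≤ y} = 2) →
          μ x y = 1) ∧
      (x ⋖ y → μ x y = -1) ∧
      (¬ (NuclearInterval x y ∧ Nat.card {z : MCover α m // x ⋖ z ∧ z ≤ y} = 2) →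
        ¬ x ⋖ y → μ x y = 0) := by
  intro x y hxy
  obtain ⟨-, -, -, p, q, -, hpq, -⟩ := x.2
  have : Nontrivial α := ⟨p, q, hpq.ne⟩
  obtain ⟨⟨-, hinf⟩, -, -⟩ := htrim m hm
  obtain ⟨⟨hsup₂, -⟩, hext₂, -⟩ := htrim 2 two_pos
  have hμ : IsMobiusFunction μ := ⟨hμ_refl, hμ_sum⟩
  choose inf hinf using hinf
  let : SemilatticeInf (MCover α m) := SemilatticeInf.ofIsGLB inf hinf
  have hcard : Nat.card {z // x ⋖ z ∧ z ≤ y} ≤ 2 := by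
    exact (Nat.card_coe_set_eq {z | x ⋖ z ∧ z ≤ y}).trans_le
      ((ncard_le_ncard fun z hz => hz.1).trans
        (x.ncard_covBy_le_two (ncard_neighborSet_hasse_le_two hsup₂ hext₂)))
  have hpos : Nat.card {z // x ⋖ z ∧ z ≤ y} ≠ 0 := by
    obtain ⟨a, hxa, hay⟩ := exists_covBy_le_of_lt hxy
    exact Nat.card_ne_zero.mpr ⟨⟨⟨a, hxa, hay⟩⟩, inferInstance⟩
  refine ⟨fun h => hμ.apply_eq_one_of_two_atoms hxy h.1 h.2, hμ.apply_eq_neg_one_of_covBy,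
    fun htwo hcov => ?_⟩
  by_contra hne
  have hnuc : NuclearInterval x y := by_contra fun h => hne (hμ.apply_eq_zero_of_not_nuclear hxy h)
  obtain h | h : Nat.card {z // x ⋖ z ∧ z ≤ y} = 1 ∨ Nat.card {z // x ⋖ z ∧ z ≤ y} = 2 := by
    omega
  · exact hcov (hnuc.covBy_of_card_eq_one h)
  · exact htwo ⟨hnuc, h⟩
end

section
/- Let m, n > 0 be integers. A step sequence u = (u₁, …, u_n) ∈ D_n^(m) is meet-irreducible in the m-Tamari lattice T_n^(m) (i.e., it has exactly one upper cover in the rotation order) if and only if there exist i ∈ {1, …, n−1} and a ∈ {1, …, mi} such that u_j = 0 for all j ≤ i and u_j = a for all j > i. -/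
/-- The set `D_n^(m)` of m-Dyck paths of length `(m+1)n`, encoded as step sequences:
weakly increasing `u : Fin n → ℕ` with `u_k ≤ m(k−1)` (1-indexed), i.e. `u k ≤ m·k`
(0-indexed). -/
def DyckM (m n : ℕ) : Type :=
  {u : Fin n → ℕ // Monotone u ∧ ∀ k : Fin n, u k ≤ m * (k : ℕ)}

/-- The rotation cover relation on step sequences: `v` is obtained from `u` by choosing a
position `i ≥ 2` (1-indexed; here `i ≥ 1`, 0-indexed) with `u_{i−1} < u_i` and
decreasing every entry of the primitive subsequence of `u` at position `i` (which ends
at position `k`) by one. -/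
def RotCovBy (m n : ℕ) (u v : Fin n → ℕ) : Prop :=
  ∃ i k : Fin n, (0 : ℕ) < (i : ℕ) ∧ (i : ℕ) ≤ (k : ℕ) ∧
    (∀ j : Fin n, (j : ℕ) + 1 = (i : ℕ) → u j < u i) ∧
    (∀ j : Fin n, (i : ℕ) < (j : ℕ) → (j : ℕ) ≤ (k : ℕ) →
      u j - u i < m * ((j : ℕ) - (i : ℕ))) ∧
    ((k : ℕ) + 1 = n ∨
      ∀ j : Fin n, (j : ℕ) = (k : ℕ) + 1 → m * ((j : ℕ) - (i : ℕ)) ≤ u j - u i) ∧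
    (∀ j : Fin n, v j = if (i : ℕ) ≤ (j : ℕ) ∧ (j : ℕ) ≤ (k : ℕ) then u j - 1 else u j)

/-- The rotation order `≤_rot` on `D_n^(m)`: the reflexive-transitive closure of the
rotation cover relation.  The m-Tamari lattice is `T_n^(m) = (D_n^(m), ≤_rot)`. -/
def TamariLe (m n : ℕ) : DyckM m n → DyckM m n → Prop :=
  Relation.ReflTransGen (fun a b => RotCovBy m n a.1 b.1)

/-- `b` covers `a` with respect to the relation `r` (playing the role of `≤`). -/
def RelCovBy {β : Type*} (r : β → β → Prop) (a b : β) : Prop :=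
  r a b ∧ a ≠ b ∧ ∀ c, r a c → r c b → c = a ∨ c = b

/-- `x` is meet-irreducible w.r.t. the order relation `r`: non-maximal with exactly one
upper cover. -/
def RelMeetIrred {β : Type*} (r : β → β → Prop) (x : β) : Prop :=
  (∃ y, r x y ∧ x ≠ y) ∧ ∃! y, RelCovBy r x y

/-- `x` is join-irreducible w.r.t. the order relation `r`: non-minimal with exactly one
lower cover. -/
def RelJoinIrred {β : Type*} (r : β → β → Prop) (x : β) : Prop :=
  (∃ y, r y x ∧ x ≠ y) ∧ ∃! y, RelCovBy r y x


/-!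
Every rotation strictly lowers a step sequence pointwise. A path in the rotation order from `u`
to its rotation `v` at `(i, k)` has to lower the entry at position `i` in some step, and a
step squeezed between `u` and `v` that lowers position `i` is forced to be the whole rotation
`u → v`; hence the upper covers of `u` are exactly its rotations. Since the primitive
subsequence at `i` is determined by `i`, these are in bijection with the ascents of `u`, and a
step sequence has exactly one ascent iff it has the form `(0, …, 0, a, …, a)`.
-/

theorem Relation.ReflTransGen.exists_step_of_not {α : Type*} {r : α → α → Prop}
    {P : α → Prop} {a b : α} (h : Relation.ReflTransGen r a b) (ha : P a) (hb : ¬ P b) :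
    ∃ x y, Relation.ReflTransGen r a x ∧ r x y ∧ Relation.ReflTransGen r y b ∧
      P x ∧ ¬ P y := by
  induction h using Relation.ReflTransGen.head_induction_on with
  | refl => exact absurd ha hb
  | @head a c hac hcb ih =>
    by_cases hc : P c
    · obtain ⟨x, y, hcx, hxy, hyb, hx, hy⟩ := ih hc
      exact ⟨x, y, hcx.head hac, hxy, hyb, hx, hy⟩
    · exact ⟨a, c, .refl, hac, hcb, ha, hc⟩

namespace Tamari

variable {m n : ℕ}

def rotate (u : Fin n → ℕ) (i k : Fin n) : Fin n → ℕ :=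
  fun j => if (i : ℕ) ≤ (j : ℕ) ∧ (j : ℕ) ≤ (k : ℕ) then u j - 1 else u j

def IsAscent (u : Fin n → ℕ) (i : Fin n) : Prop :=
  0 < (i : ℕ) ∧ ∀ j : Fin n, (j : ℕ) + 1 = (i : ℕ) → u j < u i

/-- `(u i, …, u k)` is the primitive subsequence of `u` at position `i`. -/
def IsPrimitiveEnd (m : ℕ) (u : Fin n → ℕ) (i k : Fin n) : Prop :=
  (i : ℕ) ≤ (k : ℕ) ∧
    (∀ j : Fin n, (i : ℕ) < (j : ℕ) → (j : ℕ) ≤ (k : ℕ) →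
      u j - u i < m * ((j : ℕ) - (i : ℕ))) ∧
    ((k : ℕ) + 1 = n ∨
      ∀ j : Fin n, (j : ℕ) = (k : ℕ) + 1 → m * ((j : ℕ) - (i : ℕ)) ≤ u j - u i)

theorem rotCovBy_iff {u v : Fin n → ℕ} :
    RotCovBy m n u v ↔ ∃ i k, IsAscent u i ∧ IsPrimitiveEnd m u i k ∧ v = rotate u i k := by
  constructor
  · rintro ⟨i, k, hi, hik, hasc, hprim, hend, hv⟩
    exact ⟨i, k, ⟨hi, hasc⟩, ⟨hik, hprim, hend⟩, funext hv⟩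
  · rintro ⟨i, k, ⟨hi, hasc⟩, ⟨hik, hprim, hend⟩, rfl⟩
    exact ⟨i, k, hi, hik, hasc, hprim, hend, fun _ => rfl⟩

section rotate

variable {u : Fin n → ℕ} {i k j : Fin n}

theorem rotate_le : rotate u i k ≤ u := fun j => by
  dsimp only [rotate]; split_ifs <;> omega

theorem rotate_of_mem (hij : (i : ℕ) ≤ j) (hjk : (j : ℕ) ≤ k) : rotate u i k j = u j - 1 :=
  if_pos ⟨hij, hjk⟩

theorem rotate_of_not_mem (hj : ¬ ((i : ℕ) ≤ j ∧ (j : ℕ) ≤ k)) : rotate u i k j = u j :=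
  if_neg hj

theorem IsAscent.one_le (hi : IsAscent u i) : 1 ≤ u i := by
  have := hi.2 ⟨i - 1, by omega⟩ (by simp only; have := hi.1; omega)
  omega

theorem IsAscent.rotate_lt (hi : IsAscent u i) (hik : (i : ℕ) ≤ k) : rotate u i k i < u i := by
  rw [rotate_of_mem le_rfl hik]
  have := hi.one_le
  omega

theorem IsAscent.rotate_ne_of_lt {i' k' : Fin n} (hi : IsAscent u i) (hik : (i : ℕ) ≤ k)
    (hii' : i < i') : rotate u i k ≠ rotate u i' k' := fun h => by
  have := hi.rotate_lt hik
  rw [h, rotate_of_not_mem (by omega)] at this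
  exact this.false

theorem IsAscent.eq_of_rotate_eq {i' k' : Fin n} (hi : IsAscent u i) (hi' : IsAscent u i')
    (hik : (i : ℕ) ≤ k) (hik' : (i' : ℕ) ≤ k') (h : rotate u i k = rotate u i' k') : i = i' := by
  rcases lt_trichotomy i i' with hlt | heq | hgt
  · exact absurd h (hi.rotate_ne_of_lt hik hlt)
  · exact heq
  · exact absurd h.symm (hi'.rotate_ne_of_lt hik' hgt)

theorem IsAscent.monotone_rotate (hu : Monotone u) (hi : IsAscent u i) :
    Monotone (rotate u i k) := by
  intro a b hab
  have hab' : (a : ℕ) ≤ b := hab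
  have hpred := hi.2 ⟨i - 1, by omega⟩ (by simp only; have := hi.1; omega)
  unfold rotate
  split_ifs with ha hb hb
  · exact Nat.sub_le_sub_right (hu hab) 1
  · exact (Nat.sub_le _ _).trans (hu hab)
  · -- `a` lies before the block and `b` in it, so they are separated by the ascent at `i`
    have h1 : u a ≤ u ⟨i - 1, by omega⟩ := hu (Fin.le_def.mpr (by simp only; omega))
    have h2 : u i ≤ u b := hu (Fin.le_def.mpr hb.1)
    omega
  · exact hu hab

end rotate

theorem exists_isPrimitiveEnd (u : Fin n → ℕ) (i : Fin n) : ∃ k, IsPrimitiveEnd m u i k := by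
  classical
  set P : ℕ → Prop := fun t => ∀ j : Fin n, (i : ℕ) < (j : ℕ) → (j : ℕ) ≤ t →
    u j - u i < m * ((j : ℕ) - (i : ℕ))
  have hin : (i : ℕ) ≤ n - 1 := by omega
  have hPi : P i := fun j h1 h2 => by omega
  have hiK : (i : ℕ) ≤ Nat.findGreatest P (n - 1) := Nat.le_findGreatest hin hPi
  have hKle := Nat.findGreatest_le (P := P) (n - 1)
  have hPK : P (Nat.findGreatest P (n - 1)) := Nat.findGreatest_spec hin hPi
  have hnP : Nat.findGreatest P (n - 1) < n - 1 → ¬ P (Nat.findGreatest P (n - 1) + 1) :=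
    fun h => Nat.findGreatest_is_greatest (Nat.lt_succ_self _) h
  generalize Nat.findGreatest P (n - 1) = K at hiK hKle hPK hnP
  refine ⟨⟨K, by omega⟩, hiK, hPK, or_iff_not_imp_left.mpr fun hKend j hj => ?_⟩
  simp only [P, not_forall, not_lt] at hnP
  obtain ⟨j', h1, h2, h3⟩ := hnP (by simp only at hKend; omega)
  obtain rfl : j = j' := by
    refine Fin.ext (le_antisymm ?_ (by simp only at hj; omega))
    by_contra hlt
    exact absurd (hPK j' h1 (by simp only at hj; omega)) (by omega)
  exact h3

theorem IsPrimitiveEnd.unique {u : Fin n → ℕ} {i k k' : Fin n} (hk : IsPrimitiveEnd m u i k)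
    (hk' : IsPrimitiveEnd m u i k') : k = k' := by
  have key : ∀ a b : Fin n, IsPrimitiveEnd m u i a → IsPrimitiveEnd m u i b → ¬ a < b := by
    rintro a b ⟨hia, -, hend⟩ ⟨-, hprim, -⟩ hab
    have hab' : (a : ℕ) < b := hab
    rcases hend with h | h
    · omega
    · have h1 := h ⟨a + 1, by omega⟩ rfl
      have h2 := hprim ⟨a + 1, by omega⟩ (by simp only; omega) (by simp only; omega)
      omega
  exact le_antisymm (not_lt.mp (key k' k hk' hk)) (not_lt.mp (key k k' hk hk'))

theorem RotCovBy.le {u v : Fin n → ℕ} (h : RotCovBy m n u v) : v ≤ u := by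
  obtain ⟨i, k, -, -, rfl⟩ := rotCovBy_iff.mp h
  exact rotate_le

theorem TamariLe.le {a b : DyckM m n} (h : TamariLe m n a b) : b.1 ≤ a.1 := by
  induction h with
  | refl => exact le_rfl
  | tail _ hbc ih => exact (RotCovBy.le hbc).trans ih

/-- Rigidity: the block of the step `x → y` lies in `[i, k]` because `y` stays above the
rotation of `u`, it contains `i`, and primitivity of `u` prevents it from ending before `k`. -/
theorem IsPrimitiveEnd.rotCovBy_eq {u x y : Fin n → ℕ} {i k : Fin n}
    (hu : IsPrimitiveEnd m u i k) (hx : Monotone x) (hxy : RotCovBy m n x y)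
    (hxu : x ≤ u) (hvy : rotate u i k ≤ y) (hxi : x i = u i) (hyi : y i < x i) :
    x = u ∧ y = rotate u i k := by
  obtain ⟨i', k', hasc', ⟨hik', hprim', hend'⟩, rfl⟩ := rotCovBy_iff.mp hxy
  have hpos : ∀ j : Fin n, (i' : ℕ) ≤ j → 1 ≤ x j := fun j hj =>
    hasc'.one_le.trans (hx (Fin.le_def.mpr hj))
  have hsub : ∀ j : Fin n, (i' : ℕ) ≤ j → (j : ℕ) ≤ k' → (i : ℕ) ≤ j ∧ (j : ℕ) ≤ k := by
    intro j h1 h2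
    by_contra hj
    have e1 : rotate u i k j ≤ rotate x i' k' j := hvy j
    rw [rotate_of_not_mem hj, rotate_of_mem h1 h2] at e1
    have : x j ≤ u j := hxu j
    have := hpos j h1
    omega
  have hii' : i = i' := by
    refine Fin.ext (le_antisymm (hsub i' le_rfl hik').1 ?_)
    by_contra hlt
    rw [rotate_of_not_mem (i := i') (k := k') (j := i) (by omega)] at hyi
    exact hyi.false
  subst hii'
  have hkk' : k = k' := by
    refine Fin.ext (le_antisymm ?_ (hsub k' hik' le_rfl).2)
    by_contra hlt
    rcases hend' with h | h
    · omega
    · have hj : (k' : ℕ) + 1 < n := by omega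
      have h1 := h ⟨k' + 1, hj⟩ rfl
      have h2 := hu.2.1 ⟨k' + 1, hj⟩ (by simp only; omega) (by simp only; omega)
      have h3 : x ⟨k' + 1, hj⟩ ≤ u ⟨k' + 1, hj⟩ := hxu _
      simp only at h1 h2
      omega
  subst hkk'
  have hxu' : x = u := by
    refine le_antisymm hxu fun j => show u j ≤ x j from ?_
    have e : rotate u i k j ≤ rotate x i k j := hvy j
    by_cases hj : (i : ℕ) ≤ j ∧ (j : ℕ) ≤ k
    · rw [rotate_of_mem hj.1 hj.2, rotate_of_mem hj.1 hj.2] at e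
      have := hpos j hj.1
      omega
    · rwa [rotate_of_not_mem hj, rotate_of_not_mem hj] at e
  exact ⟨hxu', hxu' ▸ rfl⟩

theorem exists_rotation_step_of_tamariLe {u a b : DyckM m n} {i k : Fin n}
    (hu : IsPrimitiveEnd m u.1 i k) (hab : TamariLe m n a b) (hau : a.1 ≤ u.1)
    (hvb : rotate u.1 i k ≤ b.1) (hai : a.1 i = u.1 i) (hbi : b.1 i ≠ u.1 i) :
    ∃ x y : DyckM m n, TamariLe m n a x ∧ TamariLe m n y b ∧
      x.1 = u.1 ∧ y.1 = rotate u.1 i k := by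
  obtain ⟨x, y, hax, hxy, hyb, hxi, hyi⟩ :=
    hab.exists_step_of_not (P := fun z : DyckM m n => z.1 i = u.1 i) hai hbi
  obtain ⟨hx, hy⟩ := hu.rotCovBy_eq x.2.1 hxy ((TamariLe.le hax).trans hau)
    (hvb.trans (TamariLe.le hyb)) hxi
    (lt_of_le_of_ne (RotCovBy.le hxy i) (fun h => hyi (h.trans hxi)))
  exact ⟨x, y, hax, hyb, hx, hy⟩

theorem relCovBy_of_rotCovBy {u v : DyckM m n} (h : RotCovBy m n u.1 v.1) :
    RelCovBy (TamariLe m n) u v := by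
  obtain ⟨i, k, hasc, hu, hv⟩ := rotCovBy_iff.mp h
  have hvi : v.1 i ≠ u.1 i := hv ▸ (hasc.rotate_lt hu.1).ne
  refine ⟨.single h, fun huv => hvi (huv ▸ rfl), fun c huc hcv => ?_⟩
  by_cases hci : c.1 i = u.1 i
  · obtain ⟨x, -, hcx, -, hx, -⟩ :=
      exists_rotation_step_of_tamariLe hu hcv (TamariLe.le huc) hv.ge hci hvi
    exact .inl (Subtype.ext (le_antisymm (TamariLe.le huc) (hx.ge.trans (TamariLe.le hcx))))
  · obtain ⟨-, y, -, hyc, -, hy⟩ :=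
      exists_rotation_step_of_tamariLe hu huc le_rfl (hv.ge.trans (TamariLe.le hcv)) rfl hci
    exact .inr (Subtype.ext (le_antisymm ((TamariLe.le hyc).trans (hy.trans hv.symm).le)
      (TamariLe.le hcv)))

theorem relCovBy_iff_rotCovBy {u v : DyckM m n} :
    RelCovBy (TamariLe m n) u v ↔ RotCovBy m n u.1 v.1 := by
  refine ⟨fun ⟨huv, hne, hmin⟩ => ?_, relCovBy_of_rotCovBy⟩
  rcases huv.cases_head with rfl | ⟨c, huc, hcv⟩
  · exact absurd rfl hne
  rcases hmin c (.single huc) hcv with rfl | rfl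
  · obtain ⟨i, k, hasc, hu, hc⟩ := rotCovBy_iff.mp huc
    exact absurd (congrFun hc i) (hasc.rotate_lt hu.1).ne'
  · exact huc

theorem relMeetIrred_iff_existsUnique_rotCovBy {u : DyckM m n} :
    RelMeetIrred (TamariLe m n) u ↔ ∃! v : DyckM m n, RotCovBy m n u.1 v.1 := by
  simp only [RelMeetIrred, relCovBy_iff_rotCovBy]
  refine ⟨And.right, fun h => ⟨?_, h⟩⟩
  obtain ⟨v, hv, -⟩ := h
  exact ⟨v, (relCovBy_of_rotCovBy hv).1, (relCovBy_of_rotCovBy hv).2.1⟩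

def rotateAt (u : DyckM m n) {i : Fin n} (hi : IsAscent u.1 i) (k : Fin n) : DyckM m n :=
  ⟨rotate u.1 i k, hi.monotone_rotate u.2.1, fun j => rotate_le j |>.trans (u.2.2 j)⟩

theorem existsUnique_rotCovBy_iff {u : DyckM m n} :
    (∃! v : DyckM m n, RotCovBy m n u.1 v.1) ↔ ∃! i, IsAscent u.1 i := by
  constructor
  · rintro ⟨v, hv, huniq⟩
    obtain ⟨i, k, hi, hk, hvk⟩ := rotCovBy_iff.mp hv
    refine ⟨i, hi, fun i' hi' => ?_⟩
    obtain ⟨k', hk'⟩ := exists_isPrimitiveEnd (m := m) u.1 i'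
    have hv' := huniq (rotateAt u hi' k') (rotCovBy_iff.mpr ⟨i', k', hi', hk', rfl⟩)
    exact hi'.eq_of_rotate_eq hi hk'.1 hk.1 ((congrArg Subtype.val hv').trans hvk)
  · rintro ⟨i, hi, huniq⟩
    obtain ⟨k, hk⟩ := exists_isPrimitiveEnd (m := m) u.1 i
    refine ⟨rotateAt u hi k, rotCovBy_iff.mpr ⟨i, k, hi, hk, rfl⟩, fun v hv => ?_⟩
    obtain ⟨i', k', hi', hk', hv'⟩ := rotCovBy_iff.mp hv
    obtain rfl := huniq i' hi'
    obtain rfl := hk'.unique hk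
    exact Subtype.ext hv'

theorem exists_isAscent_of_lt {u : Fin n → ℕ} {a b : Fin n} (hab : a ≤ b) (h : u a < u b) :
    ∃ i, a < i ∧ i ≤ b ∧ IsAscent u i := by
  obtain ⟨b, hb⟩ := b
  induction b with
  | zero =>
    obtain rfl : a = ⟨0, hb⟩ := le_antisymm hab (Fin.le_def.mpr (Nat.zero_le _))
    exact absurd h (lt_irrefl _)
  | succ b ih =>
    have hab' : a ≠ ⟨b + 1, hb⟩ := by rintro rfl; exact h.false
    have hab'' : (a : ℕ) ≤ b := by
      have : (a : ℕ) ≠ b + 1 := fun e => hab' (Fin.ext e)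
      have : (a : ℕ) ≤ b + 1 := hab
      omega
    by_cases hstep : u ⟨b, by omega⟩ < u ⟨b + 1, hb⟩
    · refine ⟨⟨b + 1, hb⟩, lt_of_le_of_ne hab hab', le_rfl, by simp, fun j hj => ?_⟩
      rwa [show j = ⟨b, by omega⟩ from Fin.ext (by simp only at hj ⊢; omega)]
    · obtain ⟨i, hai, hib, hi⟩ := ih (by omega) hab'' (by omega)
      exact ⟨i, hai, Fin.le_def.mpr (by have : (i : ℕ) ≤ b := hib; simp only; omega), hi⟩

theorem existsUnique_isAscent_iff (u : DyckM m n) :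
    (∃! i, IsAscent u.1 i) ↔
      ∃ i a : ℕ, 1 ≤ i ∧ i ≤ n - 1 ∧ 1 ≤ a ∧ a ≤ m * i ∧
        ∀ j : Fin n, ((j : ℕ) < i → u.1 j = 0) ∧ (i ≤ (j : ℕ) → u.1 j = a) := by
  constructor
  · rintro ⟨i, hi, huniq⟩
    refine ⟨i, u.1 i, hi.1, by omega, hi.one_le, u.2.2 i, fun j => ⟨fun hj => ?_, fun hj => ?_⟩⟩
    · have h0 : u.1 ⟨0, by omega⟩ = 0 := Nat.le_zero.mp (by simpa using u.2.2 ⟨0, by omega⟩)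
      by_contra hne
      obtain ⟨i', -, hi'j, hi'⟩ := exists_isAscent_of_lt (u := u.1) (a := ⟨0, by omega⟩)
        (Fin.le_def.mpr (Nat.zero_le j)) (by omega)
      have hi'j' : (i' : ℕ) ≤ j := hi'j
      rw [huniq i' hi'] at hi'j'
      omega
    · refine le_antisymm ?_ (u.2.1 (Fin.le_def.mpr hj))
      by_contra! hlt
      obtain ⟨i', hii', -, hi'⟩ := exists_isAscent_of_lt (Fin.le_def.mpr hj) hlt
      exact hii'.ne (huniq i' hi').symm
  · rintro ⟨i, a, hi1, hin, ha1, -, hu⟩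
    refine ⟨⟨i, by omega⟩, ⟨hi1, fun j hj => ?_⟩, fun i' ⟨hi'0, hi'⟩ => Fin.ext ?_⟩
    · simp only at hj
      rw [(hu j).1 (by omega), (hu _).2 le_rfl]
      omega
    · have hpred := hi' ⟨i' - 1, by omega⟩ (by simp only; omega)
      rcases lt_trichotomy (i' : ℕ) i with hlt | heq | hgt
      · rw [(hu i').1 hlt] at hpred
        omega
      · exact heq
      · rw [(hu i').2 hgt.le, (hu _).2 (by simp only; omega)] at hpred
        omega

end Tamari

theorem stmt_14_general (m n : ℕ) (u : DyckM m n) :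
    RelMeetIrred (TamariLe m n) u ↔
      ∃ i a : ℕ, 1 ≤ i ∧ i ≤ n - 1 ∧ 1 ≤ a ∧ a ≤ m * i ∧
        ∀ j : Fin n, ((j : ℕ) < i → u.1 j = 0) ∧ (i ≤ (j : ℕ) → u.1 j = a) := by
  rw [Tamari.relMeetIrred_iff_existsUnique_rotCovBy, Tamari.existsUnique_rotCovBy_iff,
    Tamari.existsUnique_isAscent_iff]

/-- A step sequence `u ∈ D_n^(m)` is meet-irreducible in the m-Tamari lattice iff
`u = (0,…,0,a,…,a)` with the `0`s in positions `1,…,i` and `a ∈ {1,…,mi}`, for some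
`i ∈ {1,…,n−1}`. -/
theorem stmt_14 (m n : ℕ) (hm : 0 < m) (hn : 0 < n) (u : DyckM m n) :
    RelMeetIrred (TamariLe m n) u ↔
      ∃ i a : ℕ, 1 ≤ i ∧ i ≤ n - 1 ∧ 1 ≤ a ∧ a ≤ m * i ∧
        ∀ j : Fin n, ((j : ℕ) < i → u.1 j = 0) ∧ (i ≤ (j : ℕ) → u.1 j = a) :=
  stmt_14_general m n u
end

section
/- Let m, n > 0 be integers and let u ∈ D_n^(m) have height sequence (h₁, …, h_{mn}). Then for each i ∈ {1, …, m} the sequence (h_i, h_{i+m}, h_{i+2m}, …, h_{i+(n−1)m}) is the height sequence of a Dyck path q_i ∈ D_n; the resulting strip-decomposition map δ : D_n^(m) → (D_n)^m, u ↦ (q₁, …, q_m), is injective; and every image tuple is increasing in dominance order: q₁ ≤_dom q₂ ≤_dom ⋯ ≤_dom q_m. -/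
/-- The height sequence of a step sequence `u : Fin n → ℕ`:
`h_k = max { j ∈ {1,…,n} : u_j < k }` (1-indexed in both `j` and `k`). -/
noncomputable def heightSeq (n : ℕ) (u : Fin n → ℕ) (k : ℕ) : ℕ :=
  sSup {j : ℕ | ∃ h : j - 1 < n, 1 ≤ j ∧ u ⟨j - 1, h⟩ < k}

/-- The step sequence of the Dyck path in `D_n` whose height sequence is
`(g 1, g 2, …, g n)`: its `j`-th entry (0-indexed) is `#{ t ∈ {1,…,n} : g t < j + 1 }`. -/
noncomputable def stepOfHeight (n : ℕ) (g : ℕ → ℕ) : Fin n → ℕ :=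
  fun j => Set.ncard {t : ℕ | 1 ≤ t ∧ t ≤ n ∧ g t < (j : ℕ) + 1}

/-- The strip decomposition `δ : D_n^(m) → (D_n)^m`: the `i`-th component (1-indexed `i`)
is the Dyck path whose height sequence is `(h_i, h_{i+m}, …, h_{i+(n−1)m})`, where
`(h_1, …, h_{mn})` is the height sequence of `u`. -/
noncomputable def strip (m n : ℕ) (u : Fin n → ℕ) : Fin m → Fin n → ℕ :=
  fun i => stepOfHeight n (fun t => heightSeq n u (((i : ℕ) + 1) + (t - 1) * m))

/-!
The step sequence `u` and its height sequence `h` determine each other through the Galois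
connection `j + 1 ≤ h k ↔ u j < k` (for monotone `u`); dually, a monotone `g` with
`t ≤ g t ≤ n` is the height sequence of `stepOfHeight n g`. A strip
`t ↦ h (i + (t - 1) m)` of the height sequence of an `m`-Dyck path is monotone, and the bound
`u_{t-1} ≤ m (t - 1) < i + (t - 1) m` gives `t ≤ h (i + (t - 1) m)`, so it is the height
sequence of a Dyck path. The strips of `u` partition `h` on `{1, …, mn}`, which determines `u`
since `u_j < mn`; and `h` is monotone, so strip `i` lies below strip `j` whenever `i ≤ j`.
-/

def IsDyckPath (m n : ℕ) (u : Fin n → ℕ) : Prop :=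
  Monotone u ∧ ∀ k : Fin n, u k ≤ m * (k : ℕ)

section HeightSeq

variable {n : ℕ} {u v : Fin n → ℕ}

lemma bddAbove_heightSeq_set (k : ℕ) :
    BddAbove {j : ℕ | ∃ h : j - 1 < n, 1 ≤ j ∧ u ⟨j - 1, h⟩ < k} :=
  ⟨n, fun _ ⟨_, _, _⟩ => by omega⟩

lemma heightSeq_le (k : ℕ) : heightSeq n u k ≤ n :=
  csSup_le' fun _ ⟨_, _, _⟩ => by omega

lemma heightSeq_mono : Monotone (heightSeq n u) := fun _ _ hk =>
  csSup_le' fun _ ⟨h, h1, hlt⟩ => le_csSup (bddAbove_heightSeq_set _) ⟨h, h1, hlt.trans_le hk⟩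

lemma succ_le_heightSeq_iff (hu : Monotone u) (j : Fin n) (k : ℕ) :
    (j : ℕ) + 1 ≤ heightSeq n u k ↔ u j < k := by
  constructor
  · intro hle
    have hne : {j : ℕ | ∃ h : j - 1 < n, 1 ≤ j ∧ u ⟨j - 1, h⟩ < k}.Nonempty := by
      by_contra hempty
      rw [Set.not_nonempty_iff_eq_empty] at hempty
      rw [heightSeq, hempty, csSup_empty] at hle
      exact absurd hle (Nat.not_succ_le_zero _)
    obtain ⟨hlt, -, hmem⟩ := Nat.sSup_mem hne (bddAbove_heightSeq_set k)
    exact (hu (Fin.mk_le_mk.mpr (by unfold heightSeq at hle; omega))).trans_lt hmem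
  · intro hlt
    exact le_csSup (bddAbove_heightSeq_set k) ⟨by simp, by simp, by simpa using hlt⟩

lemma eq_of_forall_succ_le_iff {a b : ℕ} (ha : a ≤ n) (hb : b ≤ n)
    (h : ∀ j : Fin n, (j : ℕ) + 1 ≤ a ↔ (j : ℕ) + 1 ≤ b) : a = b := by
  by_contra hne
  rcases Nat.lt_or_gt_of_ne hne with hab | hab
  · exact absurd ((h ⟨a, by omega⟩).mpr hab) (by simp)
  · exact absurd ((h ⟨b, by omega⟩).mp hab) (by simp)

lemma le_of_heightSeq_eq {K : ℕ} (hu : Monotone u) (hv : Monotone v) (huK : ∀ j, u j < K)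
    (h : ∀ k, 1 ≤ k → k ≤ K → heightSeq n u k = heightSeq n v k) (j : Fin n) : v j ≤ u j := by
  have hself : (j : ℕ) + 1 ≤ heightSeq n u (u j + 1) :=
    (succ_le_heightSeq_iff hu j _).mpr (Nat.lt_succ_self _)
  rw [h _ (Nat.succ_pos _) (huK j), succ_le_heightSeq_iff hv] at hself
  exact Nat.le_of_lt_succ hself

lemma eq_of_heightSeq_eq {K : ℕ} (hu : Monotone u) (hv : Monotone v) (huK : ∀ j, u j < K)
    (hvK : ∀ j, v j < K) (h : ∀ k, 1 ≤ k → k ≤ K → heightSeq n u k = heightSeq n v k) :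
    u = v :=
  funext fun j => le_antisymm
    (le_of_heightSeq_eq hv hu hvK (fun k hk1 hkK => (h k hk1 hkK).symm) j)
    (le_of_heightSeq_eq hu hv huK h j)

end HeightSeq

section StepOfHeight

variable {n : ℕ} {g : ℕ → ℕ}

lemma stepOfHeight_eq_card (j : Fin n) :
    stepOfHeight n g j = ((Finset.Icc 1 n).filter fun t => g t < (j : ℕ) + 1).card := by
  rw [stepOfHeight, ← Set.ncard_coe_finset]
  congr 1
  ext t
  simp [and_assoc]

lemma monotone_stepOfHeight : Monotone (stepOfHeight n g) := by
  intro j j' hj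
  rw [stepOfHeight_eq_card, stepOfHeight_eq_card]
  refine Finset.card_le_card fun t ht => ?_
  simp only [Finset.mem_filter] at ht ⊢
  exact ⟨ht.1, ht.2.trans_le (Nat.succ_le_succ hj)⟩

lemma stepOfHeight_le (hg : ∀ t, 1 ≤ t → t ≤ n → t ≤ g t) (j : Fin n) :
    stepOfHeight n g j ≤ j := by
  rw [stepOfHeight_eq_card]
  calc _ ≤ (Finset.Icc 1 (j : ℕ)).card := by
        refine Finset.card_le_card fun t ht => ?_
        simp only [Finset.mem_filter, Finset.mem_Icc] at ht ⊢
        have := hg t ht.1.1 ht.1.2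
        omega
    _ = j := by simp

/-- Since `g` is monotone, the `t ∈ {1, …, n}` with `g t ≤ j` form an initial segment, which
has fewer than `t` elements exactly when it misses `t`. -/
lemma stepOfHeight_lt_iff (hg : Monotone g) (j : Fin n) {t : ℕ} (ht1 : 1 ≤ t) (htn : t ≤ n) :
    stepOfHeight n g j < t ↔ (j : ℕ) + 1 ≤ g t := by
  rw [stepOfHeight_eq_card]
  constructor
  · intro hcard
    by_contra! hgt
    have hsub : Finset.Icc 1 t ⊆ (Finset.Icc 1 n).filter fun s => g s < (j : ℕ) + 1 := by
      intro s hs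
      simp only [Finset.mem_filter, Finset.mem_Icc] at hs ⊢
      exact ⟨⟨hs.1, hs.2.trans htn⟩, (hg hs.2).trans_lt hgt⟩
    have := Finset.card_le_card hsub
    simp only [Nat.card_Icc, add_tsub_cancel_right] at this
    omega
  · intro hle
    calc _ ≤ (Finset.Icc 1 (t - 1)).card := by
          refine Finset.card_le_card fun s hs => ?_
          simp only [Finset.mem_filter, Finset.mem_Icc] at hs ⊢
          refine ⟨hs.1.1, ?_⟩
          by_contra! hts
          have := hg (show t ≤ s by omega)
          omega
      _ < t := by simp; omega

lemma heightSeq_stepOfHeight (hg : Monotone g) (hgn : ∀ t, g t ≤ n)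
    {t : ℕ} (ht1 : 1 ≤ t) (htn : t ≤ n) :
    heightSeq n (stepOfHeight n g) t = g t :=
  eq_of_forall_succ_le_iff (heightSeq_le t) (hgn t) fun j =>
    (succ_le_heightSeq_iff monotone_stepOfHeight j t).trans (stepOfHeight_lt_iff hg j ht1 htn)

end StepOfHeight

section Strip

variable {m n : ℕ} {u v : Fin n → ℕ}

lemma le_heightSeq_strip_index (hu : IsDyckPath m n u) (i : ℕ) {t : ℕ} (ht1 : 1 ≤ t)
    (htn : t ≤ n) : t ≤ heightSeq n u ((i + 1) + (t - 1) * m) := by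
  have hdyck := hu.2 ⟨t - 1, by omega⟩
  have := (succ_le_heightSeq_iff hu.1 ⟨t - 1, by omega⟩ ((i + 1) + (t - 1) * m)).mpr
    (by simp only at hdyck ⊢; rw [mul_comm] at hdyck; omega)
  simpa [Nat.sub_add_cancel ht1] using this

lemma monotone_strip_heightSeq (i : ℕ) :
    Monotone fun t => heightSeq n u ((i + 1) + (t - 1) * m) := fun _ _ h =>
  heightSeq_mono (Nat.add_le_add_left (Nat.mul_le_mul_right m (Nat.sub_le_sub_right h 1)) _)

lemma heightSeq_strip (i : Fin m) {t : ℕ} (ht1 : 1 ≤ t) (htn : t ≤ n) :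
    heightSeq n (strip m n u i) t = heightSeq n u (((i : ℕ) + 1) + (t - 1) * m) :=
  heightSeq_stepOfHeight (monotone_strip_heightSeq i) (fun _ => heightSeq_le _) ht1 htn

lemma isDyckPath_strip (hu : IsDyckPath m n u) (i : Fin m) : IsDyckPath 1 n (strip m n u i) :=
  ⟨monotone_stepOfHeight, fun k => by
    rw [one_mul]
    exact stepOfHeight_le (fun _ ht1 htn => le_heightSeq_strip_index hu i ht1 htn) k⟩

lemma exists_strip_index (hm : 0 < m) {k : ℕ} (hk1 : 1 ≤ k) (hkmn : k ≤ m * n) :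
    ∃ i : Fin m, ∃ t, 1 ≤ t ∧ t ≤ n ∧ ((i : ℕ) + 1) + (t - 1) * m = k := by
  refine ⟨⟨(k - 1) % m, Nat.mod_lt _ hm⟩, (k - 1) / m + 1, Nat.le_add_left 1 _, ?_, ?_⟩
  · have : (k - 1) / m < n := (Nat.div_lt_iff_lt_mul hm).mpr (by rw [mul_comm]; omega)
    omega
  · have := Nat.mod_add_div (k - 1) m
    simp only [add_tsub_cancel_right, mul_comm ((k - 1) / m)]
    omega

lemma IsDyckPath.lt_mul (hm : 0 < m) (hu : IsDyckPath m n u) (j : Fin n) : u j < m * n :=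
  (hu.2 j).trans_lt (Nat.mul_lt_mul_of_pos_left j.isLt hm)

lemma strip_injOn (hm : 0 < m) : Set.InjOn (strip m n) {u | IsDyckPath m n u} := by
  intro u hu v hv huv
  refine eq_of_heightSeq_eq hu.1 hv.1 (hu.lt_mul hm) (hv.lt_mul hm) fun k hk1 hkmn => ?_
  obtain ⟨i, t, ht1, htn, rfl⟩ := exists_strip_index hm hk1 hkmn
  rw [← heightSeq_strip (u := u) i ht1 htn, ← heightSeq_strip (u := v) i ht1 htn, huv]

lemma heightSeq_strip_mono {i j : Fin m} (hij : i ≤ j) {t : ℕ}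
    (ht1 : 1 ≤ t) (htn : t ≤ n) :
    heightSeq n (strip m n u i) t ≤ heightSeq n (strip m n u j) t := by
  rw [heightSeq_strip i ht1 htn, heightSeq_strip j ht1 htn]
  exact heightSeq_mono (by simp only [Fin.le_def] at hij; omega)

end Strip

theorem stmt_18_general (m n : ℕ) (hm : 0 < m) (u : Fin n → ℕ)
    (hu : Monotone u ∧ ∀ k : Fin n, u k ≤ m * (k : ℕ)) :
    (∀ i : Fin m,
      (Monotone (strip m n u i) ∧ ∀ k : Fin n, strip m n u i k ≤ (k : ℕ)) ∧
      ∀ t : ℕ, 1 ≤ t → t ≤ n →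
        heightSeq n (strip m n u i) t = heightSeq n u (((i : ℕ) + 1) + (t - 1) * m)) ∧
    (∀ v : Fin n → ℕ, (Monotone v ∧ ∀ k : Fin n, v k ≤ m * (k : ℕ)) →
      strip m n u = strip m n v → u = v) ∧
    (∀ i j : Fin m, i ≤ j → ∀ t : ℕ, 1 ≤ t → t ≤ n →
      heightSeq n (strip m n u i) t ≤ heightSeq n (strip m n u j) t) := by
  refine ⟨fun i => ⟨?_, fun t => heightSeq_strip i⟩,
    fun v hv => strip_injOn hm hu hv, fun i j hij t => heightSeq_strip_mono hij⟩
  simpa [IsDyckPath] using isDyckPath_strip hu i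

/-- For `u ∈ D_n^(m)`: each component of the strip decomposition `δ(u)` is a Dyck path in
`D_n` whose height sequence is `(h_i, h_{i+m}, …, h_{i+(n−1)m})`; the map `δ` is
injective on `D_n^(m)`; and the components of `δ(u)` are increasing in dominance order
(componentwise comparison of height sequences). -/
theorem stmt_18 (m n : ℕ) (hm : 0 < m) (hn : 0 < n) (u : Fin n → ℕ)
    (hu : Monotone u ∧ ∀ k : Fin n, u k ≤ m * (k : ℕ)) :
    (∀ i : Fin m,
      (Monotone (strip m n u i) ∧ ∀ k : Fin n, strip m n u i k ≤ (k : ℕ)) ∧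
      ∀ t : ℕ, 1 ≤ t → t ≤ n →
        heightSeq n (strip m n u i) t = heightSeq n u (((i : ℕ) + 1) + (t - 1) * m)) ∧
    (∀ v : Fin n → ℕ, (Monotone v ∧ ∀ k : Fin n, v k ≤ m * (k : ℕ)) →
      strip m n u = strip m n v → u = v) ∧
    (∀ i j : Fin m, i ≤ j → ∀ t : ℕ, 1 ≤ t → t ≤ n →
      heightSeq n (strip m n u i) t ≤ heightSeq n (strip m n u j) t) :=
  stmt_18_general m n hm u hu
end
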